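/- arXiv:2006.16687 — 15 statements merged into one kernel-verified Lean document; each statement's English description precedes it below -/
import Mathlib

section
/- Let n ≥ 2 and let a_1,…,a_n be integers with a_i ≥ 2 for all i. Set x = [−a_1,…,−a_n], y = [−a_1,…,−a_{n−1},−a_n+1], and z = [−a_1,…,−a_{n−1}] (values of Hirzebruch–Jung continued fractions). Then z < x < y, and each of the three pairs (x,y), (x,z), (y,z) is joined by an edge in the Farey graph, i.e. writing each number in lowest terms as a fraction with positive denominator, for each pair a/b, c/d one has |ad − bc| = 1. -/
/-!
The map `u ↦ c - 1/u` is the Möbius transformation of the determinant-one matrix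
`[[c, -1], [1, 0]]`, so it preserves Farey edges; for `c ≤ -2` it is also increasing on the
negative rationals and maps `(-∞, -1]` into itself. Peeling off the common prefix of the three
continued fractions therefore reduces the claim to the last one or two entries, where
`b < b + 1` and `c < c - 1/d` are visibly Farey neighbours.
-/

/-- Hirzebruch–Jung continued fraction `[x₁,…,x_r] = x₁ − 1/(x₂ − 1/(⋯ − 1/x_r))`. -/
def hjCF : List ℤ → ℚ
  | [] => 0
  | a :: l => (a : ℚ) - 1 / hjCF l

/-- Two rationals are Farey neighbors (joined by an edge in the Farey graph) if,
writing them in lowest terms `a/b` and `c/d` with positive denominators,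
`|a*d − b*c| = 1`. -/
def FareyNeighbor (x y : ℚ) : Prop :=
  (x.num * (y.den : ℤ) - y.num * (x.den : ℤ)).natAbs = 1

namespace FareyNeighbor

theorem symm {x y : ℚ} (h : FareyNeighbor x y) : FareyNeighbor y x := by
  unfold FareyNeighbor at *
  rw [← h, ← Int.natAbs_neg, neg_sub]

/-- The fractions need not be reduced: `pq' - p'q` is an integer multiple of the determinant
of the reduced forms. -/
theorem of_det {p q p' q' : ℤ} (hq : q ≠ 0) (hq' : q' ≠ 0)
    (h : (p * q' - p' * q).natAbs = 1) : FareyNeighbor (p / q) (p' / q') := by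
  obtain ⟨k, hpk, hqk⟩ := Rat.exists_eq_mul_div_num_and_eq_mul_div_den p hq
  obtain ⟨k', hpk', hqk'⟩ := Rat.exists_eq_mul_div_num_and_eq_mul_div_den p' hq'
  unfold FareyNeighbor
  set x : ℚ := p / q
  set y : ℚ := p' / q'
  have hdet : p * q' - p' * q = (k * k') * (x.num * y.den - y.num * x.den) := by
    rw [hpk, hqk, hpk', hqk']
    ring
  rw [hdet, Int.natAbs_mul] at h
  exact Nat.eq_one_of_mul_eq_one_left h

theorem intCast_add_one (m : ℤ) : FareyNeighbor m (m + 1) := by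
  simpa using of_det (p := m) (p' := m + 1) one_ne_zero one_ne_zero (by simp)

theorem intCast_sub_one_div (c d : ℤ) (hd : d ≠ 0) : FareyNeighbor c (c - 1 / d) := by
  have hrepr : (c : ℚ) - 1 / d = ((c * d - 1 : ℤ) : ℚ) / (d : ℚ) := by
    field_simp
    push_cast
    ring
  rw [hrepr]
  simpa using of_det (p := c) (q := 1) (p' := c * d - 1) one_ne_zero hd (by norm_num)

theorem sub_one_div (c : ℤ) {u v : ℚ} (hu : u ≠ 0) (hv : v ≠ 0) (h : FareyNeighbor u v) :
    FareyNeighbor (c - 1 / u) (c - 1 / v) := by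
  have hrepr : ∀ w : ℚ, w ≠ 0 → (c : ℚ) - 1 / w = ((c * w.num - w.den : ℤ) : ℚ) / w.num := by
    intro w hw
    have hnum : (w.num : ℚ) ≠ 0 := by exact_mod_cast Rat.num_ne_zero.mpr hw
    nth_rw 1 [← Rat.num_div_den w]
    field_simp
    push_cast
    ring
  rw [hrepr u hu, hrepr v hv]
  refine of_det (Rat.num_ne_zero.mpr hu) (Rat.num_ne_zero.mpr hv) ?_
  unfold FareyNeighbor at h
  convert h using 2
  ring

end FareyNeighbor

theorem sub_one_div_le_neg_one {c : ℤ} (hc : c ≤ -2) {u : ℚ} (hu : u ≤ -1) :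
    (c : ℚ) - 1 / u ≤ -1 := by
  have hc' : (c : ℚ) ≤ -2 := by exact_mod_cast hc
  have : -1 ≤ 1 / u := by
    rw [le_div_iff_of_neg (by linarith)]
    linarith
  linarith

def NegFareyEdge (u v : ℚ) : Prop :=
  u < v ∧ v ≤ -1 ∧ FareyNeighbor u v

theorem NegFareyEdge.sub_one_div {c : ℤ} (hc : c ≤ -2) {u v : ℚ} (h : NegFareyEdge u v) :
    NegFareyEdge (c - 1 / u) (c - 1 / v) := by
  obtain ⟨huv, hv, hF⟩ := h
  refine ⟨?_, sub_one_div_le_neg_one hc hv, hF.sub_one_div c (by linarith) (by linarith)⟩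
  linarith [one_div_lt_one_div_of_neg_of_lt (by linarith : v < 0) huv]

theorem NegFareyEdge.hjCF_append {s t : List ℤ} (h : NegFareyEdge (hjCF s) (hjCF t))
    {l : List ℤ} (hl : ∀ c ∈ l, c ≤ -2) : NegFareyEdge (hjCF (l ++ s)) (hjCF (l ++ t)) := by
  induction l with
  | nil => exact h
  | cons c l ih =>
    exact (ih fun d hd => hl d (List.mem_cons_of_mem c hd)).sub_one_div (hl c List.mem_cons_self)

theorem negFareyEdge_hjCF_singleton {b : ℤ} (hb : b ≤ -2) :
    NegFareyEdge (hjCF [b]) (hjCF [b + 1]) := by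
  simp only [hjCF, div_zero, sub_zero, Int.cast_add, Int.cast_one]
  refine ⟨by linarith, by exact_mod_cast (by omega : b + 1 ≤ -1), ?_⟩
  exact_mod_cast FareyNeighbor.intCast_add_one b

theorem negFareyEdge_hjCF_pair {c d : ℤ} (hc : c ≤ -2) (hd : d ≤ -1) :
    NegFareyEdge (hjCF [c]) (hjCF [c, d]) := by
  have hd' : (d : ℚ) ≤ -1 := by exact_mod_cast hd
  simp only [hjCF, div_zero, sub_zero]
  refine ⟨?_, sub_one_div_le_neg_one hc hd', FareyNeighbor.intCast_sub_one_div c d (by omega)⟩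
  linarith [one_div_neg.mpr (by linarith : (d : ℚ) < 0)]

theorem stmt0 (n : ℕ) (hn : 2 ≤ n) (a : ℕ → ℤ) (ha : ∀ i < n, 2 ≤ a i)
    (x y z : ℚ)
    (hx : x = hjCF ((List.range n).map fun i => -a i))
    (hy : y = hjCF ((List.range (n - 1)).map (fun i => -a i) ++ [-a (n - 1) + 1]))
    (hz : z = hjCF ((List.range (n - 1)).map fun i => -a i)) :
    z < x ∧ x < y ∧ FareyNeighbor x y ∧ FareyNeighbor x z ∧ FareyNeighbor y z := by
  obtain ⟨m, rfl⟩ : ∃ m, n = m + 2 := ⟨n - 2, by omega⟩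
  set l := (List.range m).map fun i => -a i
  have hl : ∀ c ∈ l, c ≤ -2 := by
    simp only [l, List.mem_map, List.mem_range]
    rintro _ ⟨i, hi, rfl⟩
    linarith [ha i (by omega)]
  have hc : -a m ≤ -2 := by linarith [ha m (by omega)]
  have hb : -a (m + 1) ≤ -2 := by linarith [ha (m + 1) (by omega)]
  have hx' : x = hjCF (l ++ [-a m, -a (m + 1)]) := by
    simp [hx, l, List.range_succ]
  have hy' : y = hjCF (l ++ [-a m, -a (m + 1) + 1]) := by
    simp [hy, l, List.range_succ]
  have hz' : z = hjCF (l ++ [-a m]) := by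
    simp [hz, l, List.range_succ]
  have hxy := (negFareyEdge_hjCF_singleton hb).hjCF_append
    (List.forall_mem_append.mpr ⟨hl, List.forall_mem_singleton.mpr hc⟩)
  have hzx := (negFareyEdge_hjCF_pair hc (by omega : -a (m + 1) ≤ -1)).hjCF_append hl
  have hzy := (negFareyEdge_hjCF_pair hc (by omega : -a (m + 1) + 1 ≤ -1)).hjCF_append hl
  simp only [List.append_assoc, List.singleton_append] at hxy
  subst hx' hy' hz'
  exact ⟨hzx.1, hxy.1, hxy.2.2, hzx.2.2.symm, hzy.2.2.symm⟩
end

section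
/- Let n ≥ 3, let a_1,…,a_n be integers with a_i ≥ 2 for all i, and let 1 < s < n with a_s = 2. Write p/q = [a_1,…,a_n], p_1/q_1 = [a_1,…,a_{s−1}], and p_2/q_2 = [a_{s+1},…,a_n], each as a fraction in lowest terms with p > q ≥ 1, p_1 > q_1 ≥ 1, p_2 > q_2 ≥ 1. Suppose p_1/(p_1−q_1) = [b_1,…,b_k] and p_2/(p_2−q_2) = [c_1,…,c_l] with all b_i ≥ 2 and all c_j ≥ 2. Then p/(p−q) = [b_1,…,b_{k−1}, b_k + c_1, c_2,…,c_l]. -/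
def hjTail : List ℤ → ℚ → ℚ
  | [], t => t
  | a :: l, t => a - 1 / hjTail l t

def hjStep (a : ℤ) : Matrix (Fin 2) (Fin 2) ℤ := !![a, -1; 1, 0]

def hjMat (L : List ℤ) : Matrix (Fin 2) (Fin 2) ℤ := (L.map hjStep).prod

theorem hjCF_append (L M : List ℤ) : hjCF (L ++ M) = hjTail L (hjCF M) := by
  induction L with
  | nil => rfl
  | cons a l ih => simp only [List.cons_append, hjCF, hjTail, ih]

theorem hjCF_singleton (a : ℤ) : hjCF [a] = a := by simp [hjCF]

theorem hjMat_cons (a : ℤ) (L : List ℤ) : hjMat (a :: L) = hjStep a * hjMat L := by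
  simp [hjMat]

theorem hjMat_cons_eq (a : ℤ) (L : List ℤ) : hjMat (a :: L) =
    !![a * hjMat L 0 0 - hjMat L 1 0, a * hjMat L 0 1 - hjMat L 1 1; hjMat L 0 0, hjMat L 0 1] := by
  rw [hjMat_cons]
  ext i j
  fin_cases i <;> fin_cases j <;> simp [hjStep, Matrix.mul_apply, Fin.sum_univ_two] <;> ring

theorem hjMat_concat_eq (L : List ℤ) (a : ℤ) : hjMat (L ++ [a]) =
    !![hjMat L 0 0 * a + hjMat L 0 1, -hjMat L 0 0; hjMat L 1 0 * a + hjMat L 1 1, -hjMat L 1 0] := by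
  ext i j
  simp only [hjMat, List.map_append, List.prod_append, List.map_cons, List.map_nil,
    List.prod_cons, List.prod_nil, mul_one]
  fin_cases i <;> fin_cases j <;> simp [hjStep, Matrix.mul_apply, Fin.sum_univ_two]

theorem det_hjMat (L : List ℤ) : (hjMat L).det = 1 := by
  induction L with
  | nil => simp [hjMat]
  | cons a l ih =>
    rw [hjMat_cons, Matrix.det_mul, ih]
    simp [hjStep, Matrix.det_fin_two_of]

theorem one_lt_hjTail {L : List ℤ} (hL : ∀ x ∈ L, 2 ≤ x) {t : ℚ} (ht : 1 < t) :
    1 < hjTail L t := by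
  induction L with
  | nil => exact ht
  | cons a l ih =>
    have ha : (2 : ℚ) ≤ a := by exact_mod_cast hL a List.mem_cons_self
    have hl := ih fun x hx => hL x (List.mem_cons_of_mem a hx)
    have : 1 / hjTail l t < 1 := (div_lt_one (by linarith)).2 hl
    simp only [hjTail]
    linarith

theorem hjTail_eq_div {L : List ℤ} (hL : ∀ x ∈ L, 2 ≤ x) {t : ℚ} (ht : 1 < t) :
    0 < hjMat L 1 0 * t + hjMat L 1 1 ∧
      hjTail L t = (hjMat L 0 0 * t + hjMat L 0 1) / (hjMat L 1 0 * t + hjMat L 1 1) := by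
  induction L with
  | nil => simp [hjMat, hjTail]
  | cons a l ih =>
    have hl : ∀ x ∈ l, 2 ≤ x := fun x hx => hL x (List.mem_cons_of_mem a hx)
    obtain ⟨hden, hval⟩ := ih hl
    have hnum : 0 < hjMat l 0 0 * t + hjMat l 0 1 := by
      have := one_lt_hjTail hl ht
      rw [hval, one_lt_div hden] at this
      linarith
    simp only [hjMat_cons_eq, hjTail, hval, one_div_div, Matrix.of_apply, Matrix.cons_val',
      Matrix.cons_val_zero, Matrix.cons_val_one, Matrix.empty_val', Matrix.cons_val_fin_one]
    refine ⟨hnum, ?_⟩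
    push_cast
    rw [eq_div_iff (by linarith), sub_mul, div_mul_cancel₀ _ hnum.ne']
    ring

theorem hjCF_eq_div {L : List ℤ} (hL : ∀ x ∈ L, 2 ≤ x) :
    hjCF L = hjMat L 0 0 / hjMat L 1 0 := by
  induction L using List.reverseRecOn with
  | nil => simp [hjCF, hjMat] -- both sides are `0`, the right one because `1 / 0 = 0`
  | append_singleton L a _ =>
    have ha : (1 : ℚ) < a := by exact_mod_cast hL a (by simp)
    rw [hjCF_append, hjCF_singleton, (hjTail_eq_div (fun x hx => hL x (by simp [hx])) ha).2,
      hjMat_concat_eq]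
    simp

theorem hjMat_top_row_bounds {L : List ℤ} (hL : ∀ x ∈ L, 2 ≤ x) :
    0 ≤ -hjMat L 0 1 ∧ -hjMat L 0 1 < hjMat L 0 0 := by
  induction L using List.reverseRecOn with
  | nil => simp [hjMat]
  | append_singleton L a ih =>
    have ha : 2 ≤ a := hL a (by simp)
    obtain ⟨h1, h2⟩ := ih fun x hx => hL x (by simp [hx])
    simp only [hjMat_concat_eq, Matrix.of_apply, Matrix.cons_val', Matrix.cons_val_zero,
      Matrix.cons_val_one, Matrix.empty_val', Matrix.cons_val_fin_one, neg_neg]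
    constructor <;> nlinarith

def hjDual (x : ℚ) : ℚ := x / (x - 1)

theorem hjDual_div {p q : ℚ} (hq : q ≠ 0) : hjDual (p / q) = p / (p - q) := by
  rw [hjDual, div_sub_one hq, div_div_div_cancel_right₀ hq]

theorem eq_and_eq_of_div_eq_div {a b c d : ℤ} (hab : IsCoprime a b) (hcd : IsCoprime c d)
    (hb : 0 < b) (hd : 0 < d) (h : (a : ℚ) / b = c / d) : a = c ∧ b = d :=
  Rat.div_int_inj hb hd (Int.isCoprime_iff_gcd_eq_one.1 hab) (Int.isCoprime_iff_gcd_eq_one.1 hcd) h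

theorem Matrix.eq_of_det_eq_one_of_col_zero_eq {M N : Matrix (Fin 2) (Fin 2) ℤ}
    (hM : M.det = 1) (hN : N.det = 1) (h00 : M 0 0 = N 0 0) (h10 : M 1 0 = N 1 0)
    (h01 : |M 0 1 - N 0 1| < M 0 0) : M = N := by
  rw [Matrix.det_fin_two] at hM hN
  have hcop : IsCoprime (M 0 0) (M 1 0) := ⟨M 1 1, -M 0 1, by linear_combination hM⟩
  have hdvd : M 0 0 ∣ M 0 1 - N 0 1 :=
    hcop.dvd_of_dvd_mul_left ⟨M 1 1 - N 1 1, by rw [← h00, ← h10] at hN; linear_combination hN - hM⟩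
  have e01 : M 0 1 = N 0 1 := sub_eq_zero.1 (Int.eq_zero_of_abs_lt_dvd hdvd h01)
  have e11 : M 1 1 = N 1 1 := by
    have h0 : M 0 0 ≠ 0 := by have := abs_nonneg (M 0 1 - N 0 1); omega
    refine mul_left_cancel₀ h0 ?_
    rw [← h00, ← h10, ← e01] at hN
    linear_combination hM - hN
  ext i j
  fin_cases i <;> fin_cases j <;> assumption

theorem hjMat_concat_col_zero_of_hjDual {P B : List ℤ} {b : ℤ} (hP : ∀ x ∈ P, 2 ≤ x)
    (hB : ∀ x ∈ B, 2 ≤ x) (hb : 2 ≤ b) (hdual : hjCF (B ++ [b]) = hjDual (hjCF P)) :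
    hjMat (B ++ [b]) 0 0 = hjMat P 0 0 ∧ hjMat (B ++ [b]) 1 0 = hjMat P 0 0 - hjMat P 1 0 := by
  have hBb : ∀ x ∈ B ++ [b], 2 ≤ x := by simpa [or_imp, forall_and] using ⟨hB, hb⟩
  have hM10 : (hjMat P 1 0 : ℚ) ≠ 0 := by
    intro h0
    have hBgt : 1 < hjCF (B ++ [b]) := by
      rw [hjCF_append, hjCF_singleton]
      exact one_lt_hjTail hB (by exact_mod_cast hb)
    -- `hjCF P = M₀₀ / 0 = 0`, whose dual is `0`
    rw [hdual, hjCF_eq_div hP, h0] at hBgt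
    norm_num [hjDual] at hBgt
  have hval : (hjMat (B ++ [b]) 1 0 : ℚ) / hjMat (B ++ [b]) 0 0 =
      (hjMat P 0 0 - hjMat P 1 0) / hjMat P 0 0 := by
    rw [← inv_div, ← hjCF_eq_div hBb, hdual, hjCF_eq_div hP, hjDual, div_sub_one hM10,
      div_div_div_cancel_right₀ hM10, inv_div]
  have hMdet := det_hjMat P
  have hNdet := det_hjMat (B ++ [b])
  rw [Matrix.det_fin_two] at hMdet hNdet
  have := hjMat_top_row_bounds hP
  have := hjMat_top_row_bounds hBb
  refine (eq_and_eq_of_div_eq_div ?_ ?_ (by omega) (by omega) (by exact_mod_cast hval)).symm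
  · exact ⟨-hjMat (B ++ [b]) 0 1, hjMat (B ++ [b]) 1 1, by linear_combination hNdet⟩
  · exact ⟨hjMat P 0 1, hjMat P 1 1 - hjMat P 0 1, by linear_combination hMdet⟩

-- The right-hand side is `!![1, 0; 1, -1] * hjMat P * !![1, -1; 0, -1]`.
theorem hjMat_concat_eq_of_hjDual {P B : List ℤ} {b : ℤ} (hP : ∀ x ∈ P, 2 ≤ x)
    (hB : ∀ x ∈ B, 2 ≤ x) (hb : 2 ≤ b) (hdual : hjCF (B ++ [b]) = hjDual (hjCF P)) :
    hjMat (B ++ [b]) = !![hjMat P 0 0, -(hjMat P 0 0 + hjMat P 0 1);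
      hjMat P 0 0 - hjMat P 1 0, hjMat P 1 1 + hjMat P 1 0 - hjMat P 0 0 - hjMat P 0 1] := by
  obtain ⟨h00, h10⟩ := hjMat_concat_col_zero_of_hjDual hP hB hb hdual
  have hN01 : 0 < -hjMat (B ++ [b]) 0 1 := by
    have := hjMat_top_row_bounds hB
    simp only [hjMat_concat_eq, Matrix.of_apply, Matrix.cons_val', Matrix.cons_val_zero,
      Matrix.cons_val_one, Matrix.empty_val', Matrix.cons_val_fin_one, neg_neg]
    omega
  have hN := (hjMat_top_row_bounds (by simpa [or_imp, forall_and] using ⟨hB, hb⟩ :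
    ∀ x ∈ B ++ [b], 2 ≤ x)).2
  have hM := hjMat_top_row_bounds hP
  refine Matrix.eq_of_det_eq_one_of_col_zero_eq (det_hjMat _)
    (by rw [Matrix.det_fin_two_of, ← det_hjMat P, Matrix.det_fin_two]; ring) ?_ ?_ ?_ <;>
    simp [abs_lt] <;> omega

theorem hjDual_hjTail_two_sub {P B : List ℤ} {b : ℤ} (hP : ∀ x ∈ P, 2 ≤ x)
    (hB : ∀ x ∈ B, 2 ≤ x) (hb : 2 ≤ b) (hdual : hjCF (B ++ [b]) = hjDual (hjCF P)) {y : ℚ}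
    (hy : 1 < y) : hjDual (hjTail P (2 - 1 / y)) = hjTail B (b + hjDual y) := by
  have hmat := hjMat_concat_eq_of_hjDual hP hB hb hdual
  rw [hjMat_concat_eq] at hmat
  simp only [EmbeddingLike.apply_eq_iff_eq, Matrix.vecCons_inj, and_true] at hmat
  obtain ⟨⟨e00, e01⟩, e10, e11⟩ := hmat
  have hτ : 1 < 2 - 1 / y := by
    have : 1 / y < 1 := (div_lt_one (by linarith)).2 hy
    linarith
  have hγ : 0 < hjDual y := div_pos (by linarith) (by linarith)
  obtain ⟨hdP, hvP⟩ := hjTail_eq_div hP hτ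
  obtain ⟨hdB, hvB⟩ := hjTail_eq_div hB (show (1 : ℚ) < b + hjDual y by
    have : (2 : ℚ) ≤ b := by exact_mod_cast hb
    linarith)
  have hx := one_lt_hjTail hP hτ
  rw [hvP, one_lt_div hdP] at hx
  rw [hjDual, hvP, hvB, div_sub_one hdP.ne', div_div_div_cancel_right₀ hdP.ne',
    div_eq_div_iff (by linarith) hdB.ne']
  rw [show hjMat B 0 1 = hjMat P 0 0 - hjMat B 0 0 * b by linarith,
    show hjMat B 1 1 = hjMat P 0 0 - hjMat P 1 0 - hjMat B 1 0 * b by linarith,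
    show hjMat B 0 0 = hjMat P 0 0 + hjMat P 0 1 by linarith,
    show hjMat B 1 0 = hjMat P 0 0 - hjMat P 1 0 + hjMat P 0 1 - hjMat P 1 1 by linarith, hjDual]
  have hy0 : y ≠ 0 := by linarith
  have hy1 : y - 1 ≠ 0 := by linarith
  push_cast
  field_simp
  ring

theorem hjDual_hjCF_append_two_append {P S B C : List ℤ} {b c : ℤ} (hP : ∀ x ∈ P, 2 ≤ x)
    (hB : ∀ x ∈ B, 2 ≤ x) (hb : 2 ≤ b) (hPB : hjCF (B ++ [b]) = hjDual (hjCF P))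
    (hSC : hjCF (c :: C) = hjDual (hjCF S)) (hS : 1 < hjCF S) :
    hjDual (hjCF (P ++ 2 :: S)) = hjCF (B ++ (b + c) :: C) := by
  have hc : hjCF ((b + c) :: C) = b + hjDual (hjCF S) := by
    rw [← hSC]; simp only [hjCF]; push_cast; ring
  rw [hjCF_append, hjCF_append, hc, ← hjDual_hjTail_two_sub hP hB hb hPB hS]
  simp [hjCF]

theorem stmt1_general (n : ℕ) (a : ℕ → ℤ) (ha : ∀ i < n, 2 ≤ a i)
    (s : ℕ) (hs1 : 1 ≤ s) (hs2 : s ≤ n - 2) (has : a s = 2)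
    (p q p₁ q₁ p₂ q₂ : ℕ)
    (hq : 1 ≤ q) (hq₁ : 1 ≤ q₁) (hq₂ : 1 ≤ q₂) (hq₂p₂ : q₂ < p₂)
    (hpqv : (p : ℚ) / q = hjCF ((List.range n).map fun i => a i))
    (hp1v : (p₁ : ℚ) / q₁ = hjCF ((List.range s).map fun i => a i))
    (hp2v : (p₂ : ℚ) / q₂ = hjCF ((List.range (n - s - 1)).map fun i => a (s + 1 + i)))
    (k l : ℕ) (hk : 1 ≤ k) (hl : 1 ≤ l)
    (b c : ℕ → ℤ) (hb : ∀ i < k, 2 ≤ b i)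
    (hbv : (p₁ : ℚ) / ((p₁ : ℚ) - q₁) = hjCF ((List.range k).map fun i => b i))
    (hcv : (p₂ : ℚ) / ((p₂ : ℚ) - q₂) = hjCF ((List.range l).map fun i => c i)) :
    (p : ℚ) / ((p : ℚ) - q) =
      hjCF ((List.range (k - 1)).map (fun i => b i) ++ [b (k - 1) + c 0] ++
        (List.range (l - 1)).map fun i => c (i + 1)) := by
  obtain ⟨m, rfl⟩ : ∃ m, n = s + 1 + m := ⟨n - s - 1, by omega⟩
  obtain ⟨k, rfl⟩ : ∃ j, k = j + 1 := ⟨k - 1, by omega⟩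
  obtain ⟨l, rfl⟩ : ∃ j, l = j + 1 := ⟨l - 1, by omega⟩
  have hq0 : (q : ℚ) ≠ 0 := by positivity
  have hq₁0 : (q₁ : ℚ) ≠ 0 := by positivity
  have hq₂0 : (q₂ : ℚ) ≠ 0 := by positivity
  rw [show s + 1 + m - s - 1 = m by omega] at hp2v
  rw [List.range_add, List.range_succ] at hpqv
  rw [List.range_succ] at hbv
  rw [List.range_succ_eq_map] at hcv
  simp only [List.map_append, List.map_map, List.map_cons, List.map_nil, Function.comp_def,
    Nat.succ_eq_add_one, List.append_assoc, List.singleton_append, has] at hpqv hbv hcv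
  rw [Nat.add_sub_cancel, Nat.add_sub_cancel, List.append_assoc, List.singleton_append,
    ← hjDual_div hq0, hpqv]
  refine hjDual_hjCF_append_two_append ?_ ?_ (hb k (by omega)) ?_ ?_ ?_
  · simp only [List.mem_map, List.mem_range]
    rintro _ ⟨i, hi, rfl⟩
    exact ha i (by omega)
  · simp only [List.mem_map, List.mem_range]
    rintro _ ⟨i, hi, rfl⟩
    exact hb i (by omega)
  · rw [← hbv, ← hp1v, hjDual_div hq₁0]
  · rw [← hcv, ← hp2v, hjDual_div hq₂0]
  · rw [← hp2v, one_lt_div (by positivity)]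
    exact_mod_cast hq₂p₂

/-- Indices are 0-based: the chain is `a 0, …, a (n-1)`, the removed entry is `a s`
with `1 ≤ s ≤ n - 2` (i.e. `1 < s < n` in 1-based indexing). -/
theorem stmt1 (n : ℕ) (hn : 3 ≤ n) (a : ℕ → ℤ) (ha : ∀ i < n, 2 ≤ a i)
    (s : ℕ) (hs1 : 1 ≤ s) (hs2 : s ≤ n - 2) (has : a s = 2)
    (p q p₁ q₁ p₂ q₂ : ℕ)
    (hpq : Nat.Coprime p q) (hq : 1 ≤ q) (hqp : q < p)
    (hp₁q₁ : Nat.Coprime p₁ q₁) (hq₁ : 1 ≤ q₁) (hq₁p₁ : q₁ < p₁)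
    (hp₂q₂ : Nat.Coprime p₂ q₂) (hq₂ : 1 ≤ q₂) (hq₂p₂ : q₂ < p₂)
    (hpqv : (p : ℚ) / q = hjCF ((List.range n).map fun i => a i))
    (hp1v : (p₁ : ℚ) / q₁ = hjCF ((List.range s).map fun i => a i))
    (hp2v : (p₂ : ℚ) / q₂ = hjCF ((List.range (n - s - 1)).map fun i => a (s + 1 + i)))
    (k l : ℕ) (hk : 1 ≤ k) (hl : 1 ≤ l)
    (b c : ℕ → ℤ) (hb : ∀ i < k, 2 ≤ b i) (hc : ∀ i < l, 2 ≤ c i)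
    (hbv : (p₁ : ℚ) / ((p₁ : ℚ) - q₁) = hjCF ((List.range k).map fun i => b i))
    (hcv : (p₂ : ℚ) / ((p₂ : ℚ) - q₂) = hjCF ((List.range l).map fun i => c i)) :
    (p : ℚ) / ((p : ℚ) - q) =
      hjCF ((List.range (k - 1)).map (fun i => b i) ++ [b (k - 1) + c 0] ++
        (List.range (l - 1)).map fun i => c (i + 1)) :=
  stmt1_general n a ha s hs1 hs2 has p q p₁ q₁ p₂ q₂ hq hq₁ hq₂ hq₂p₂ hpqv hp1v hp2v k l hk hl b c
    hb hbv hcv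
end

section
/- Let n ≥ 3, let a_1,…,a_n be integers with a_i ≥ 2 for all i, and let 1 < s < n with a_s ≥ 3. Write p/q = [a_1,…,a_n], p_1/q_1 = [a_1,…,a_{s−1}], and p_2/q_2 = [a_{s+1},…,a_n], each as a fraction in lowest terms with p > q ≥ 1, p_1 > q_1 ≥ 1, p_2 > q_2 ≥ 1. Suppose p_1/(p_1−q_1) = [b_1,…,b_k] and p_2/(p_2−q_2) = [c_1,…,c_l] with all b_i ≥ 2 and all c_j ≥ 2. Then p/(p−q) = [b_1,…,b_{k−1}, b_k + 1, 2,…,2, c_1 + 1, c_2,…,c_l], where there are exactly a_s − 3 entries equal to 2 between b_k + 1 and c_1 + 1. -/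
/-!
`[x₁,…,x_r] = p/q` is read off the first column `(p, q)` of the integer matrix
`M x₁ ⋯ M x_r`, `M x = !![x, -1; 1, 0]`. For entries `≥ 2` this product has determinant `1`
and its second column `(b, d)` satisfies `-p < b ≤ -1` (look at the reversed chain), which
determines it. Hence the chain with value `p/(p-q)` has matrix `T W K`, where `W` is the matrix
of the original chain, `T = !![1, 0; 1, -1]` and `K = !![1, -1; 0, -1]`.
Since `T² = K² = 1` and `M (x+1) R M (y+1) = M x K M (μ+3) T M y`, with `R` the matrix of
`μ` entries `2`, concatenating the dual chains as in the theorem gives `T (W₁ M(a_s) W₂) K`: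
the dual of the whole chain.
-/

open Matrix

lemma List.map_range_split {α : Type*} (f : ℕ → α) {s n : ℕ} (h : s < n) :
    (List.range n).map f =
      (List.range s).map f ++ [f s] ++ (List.range (n - s - 1)).map fun i => f (s + 1 + i) := by
  obtain ⟨m, rfl⟩ : ∃ m, n = s + 1 + m := ⟨n - s - 1, by omega⟩
  rw [show s + 1 + m - s - 1 = m by omega, List.range_add, List.range_succ]
  simp [Function.comp_def]

lemma List.map_range_eq_concat {α : Type*} (f : ℕ → α) {k : ℕ} (hk : 1 ≤ k) :
    (List.range k).map f = (List.range (k - 1)).map f ++ [f (k - 1)] := by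
  obtain ⟨k, rfl⟩ : ∃ k', k = k' + 1 := ⟨k - 1, by omega⟩
  simp [List.range_succ]

lemma List.map_range_eq_cons {α : Type*} (f : ℕ → α) {l : ℕ} (hl : 1 ≤ l) :
    (List.range l).map f = f 0 :: (List.range (l - 1)).map fun i => f (i + 1) := by
  obtain ⟨l, rfl⟩ : ∃ l', l = l' + 1 := ⟨l - 1, by omega⟩
  simp [List.range_succ_eq_map, Function.comp_def]

lemma Matrix.eq_of_det_eq_one_of_col_zero_eq_s2 {W W' : Matrix (Fin 2) (Fin 2) ℤ}
    (hW : W.det = 1) (hW' : W'.det = 1) (h00 : W 0 0 = W' 0 0) (h10 : W 1 0 = W' 1 0)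
    (hb : W 0 1 ∈ Set.Ioc (-W 0 0) 0) (hb' : W' 0 1 ∈ Set.Ioc (-W 0 0) 0) : W = W' := by
  rw [det_fin_two] at hW hW'
  obtain ⟨hb₁, hb₂⟩ := hb
  obtain ⟨hb'₁, hb'₂⟩ := hb'
  have hcop : IsCoprime (W 0 0) (W 1 0) := ⟨W 1 1, -W 0 1, by linear_combination hW⟩
  have h01 : W 0 1 = W' 0 1 := by
    have hdvd : W 0 0 ∣ W 0 1 - W' 0 1 := hcop.dvd_of_dvd_mul_left
      ⟨W 1 1 - W' 1 1, by rw [← h00, ← h10] at hW'; linear_combination hW' - hW⟩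
    have := Int.eq_zero_of_abs_lt_dvd hdvd (abs_sub_lt_iff.mpr ⟨by omega, by omega⟩)
    omega
  have h11 : W 1 1 = W' 1 1 := by
    have : W 0 0 * (W 1 1 - W' 1 1) = 0 := by
      rw [← h00, ← h10, ← h01] at hW'
      linear_combination hW - hW'
    rcases mul_eq_zero.mp this with h | h <;> omega
  ext i j
  fin_cases i <;> fin_cases j <;> assumption

namespace HirzebruchJung

def entryMat (x : ℤ) : Matrix (Fin 2) (Fin 2) ℤ := !![x, -1; 1, 0]

def cfMat (L : List ℤ) : Matrix (Fin 2) (Fin 2) ℤ := (L.map entryMat).prod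

@[simp] lemma cfMat_nil : cfMat [] = 1 := rfl

@[simp] lemma cfMat_cons (x : ℤ) (L : List ℤ) : cfMat (x :: L) = entryMat x * cfMat L := by
  simp [cfMat]

lemma cfMat_singleton (x : ℤ) : cfMat [x] = entryMat x := by simp

lemma cfMat_append (L M : List ℤ) : cfMat (L ++ M) = cfMat L * cfMat M := by
  simp [cfMat]

lemma cfMat_cons_zero_zero (x : ℤ) (L : List ℤ) :
    cfMat (x :: L) 0 0 = x * cfMat L 0 0 - cfMat L 1 0 := by
  simp [entryMat, mul_apply, Fin.sum_univ_two, sub_eq_add_neg]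

lemma cfMat_cons_one_zero (x : ℤ) (L : List ℤ) : cfMat (x :: L) 1 0 = cfMat L 0 0 := by
  simp [entryMat, mul_apply, Fin.sum_univ_two]

lemma cfMat_replicate_two (μ : ℕ) :
    cfMat (List.replicate μ 2) = !![(μ : ℤ) + 1, -μ; μ, 1 - μ] := by
  induction μ with
  | zero => simp [one_fin_two]
  | succ μ ih =>
    rw [List.replicate_succ, cfMat_cons, ih, entryMat, mul_fin_two]
    push_cast
    ring_nf

lemma det_cfMat (L : List ℤ) : (cfMat L).det = 1 := by
  induction L with
  | nil => simp
  | cons x L ih => rw [cfMat_cons, det_mul, ih, entryMat, det_fin_two_of]; simp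

lemma cfMat_reverse (L : List ℤ) :
    cfMat L.reverse = !![1, 0; 0, -1] * (cfMat L)ᵀ * !![1, 0; 0, -1] := by
  induction L with
  | nil => ext i j; fin_cases i <;> fin_cases j <;> rfl
  | cons x L ih =>
    have h : !![1, 0; 0, -1] * entryMat x = (entryMat x)ᵀ * !![1, 0; 0, -1] := by
      ext i j; fin_cases i <;> fin_cases j <;> simp [entryMat, mul_apply, Fin.sum_univ_two]
    rw [List.reverse_cons, cfMat_append, ih, cfMat_singleton, cfMat_cons, transpose_mul,
      Matrix.mul_assoc, h, ← Matrix.mul_assoc, ← Matrix.mul_assoc]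

variable {L M : List ℤ}

lemma cfMat_col_zero_bounds (hL : ∀ x ∈ L, 2 ≤ x) :
    0 ≤ cfMat L 1 0 ∧ cfMat L 1 0 < cfMat L 0 0 := by
  induction L with
  | nil => simp
  | cons x L ih =>
    obtain ⟨h0, h1⟩ := ih fun y hy => hL y (List.mem_cons_of_mem x hy)
    have hx : 2 ≤ x := hL x List.mem_cons_self
    rw [cfMat_cons_zero_zero, cfMat_cons_one_zero]
    constructor <;> nlinarith

lemma one_le_cfMat_one_zero (hL : ∀ x ∈ L, 2 ≤ x) (hne : L ≠ []) : 1 ≤ cfMat L 1 0 := by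
  obtain ⟨x, L, rfl⟩ := List.exists_cons_of_ne_nil hne
  have := cfMat_col_zero_bounds fun y hy => hL y (List.mem_cons_of_mem x hy)
  rw [cfMat_cons_one_zero]
  omega

lemma cfMat_zero_one_bounds (hL : ∀ x ∈ L, 2 ≤ x) (hne : L ≠ []) :
    -cfMat L 0 0 < cfMat L 0 1 ∧ cfMat L 0 1 ≤ -1 := by
  have hrev : ∀ x ∈ L.reverse, 2 ≤ x := by simpa using hL
  have h1 := one_le_cfMat_one_zero hrev (by simpa using hne)
  have h2 := (cfMat_col_zero_bounds hrev).2
  simp only [cfMat_reverse, mul_apply, Fin.sum_univ_two, transpose_apply, of_apply, cons_val',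
    cons_val_zero, cons_val_one, empty_val', cons_val_fin_one] at h1 h2
  omega

lemma hjCF_eq_div (hL : ∀ x ∈ L, 2 ≤ x) : hjCF L = cfMat L 0 0 / cfMat L 1 0 := by
  induction L with
  | nil => simp [hjCF]
  | cons x L ih =>
    have hL' : ∀ y ∈ L, 2 ≤ y := fun y hy => hL y (List.mem_cons_of_mem x hy)
    have hpos : (0 : ℚ) < cfMat L 0 0 := by
      have := cfMat_col_zero_bounds hL'
      exact_mod_cast this.1.trans_lt this.2
    rw [hjCF, ih hL', cfMat_cons_zero_zero, cfMat_cons_one_zero]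
    push_cast
    field_simp

lemma cfMat_col_zero_eq_of_hjCF_eq (hL : ∀ x ∈ L, 2 ≤ x) (hne : L ≠ []) {P Q : ℤ} (hQ : 0 < Q)
    (hPQ : IsCoprime P Q) (h : hjCF L = P / Q) : cfMat L 0 0 = P ∧ cfMat L 1 0 = Q := by
  have hc := one_le_cfMat_one_zero hL hne
  have hcop : IsCoprime (cfMat L 0 0) (cfMat L 1 0) :=
    ⟨cfMat L 1 1, -cfMat L 0 1, by linear_combination (det_fin_two _).symm.trans (det_cfMat L)⟩
  refine Rat.div_int_inj (by omega) hQ ?_ ?_ ((hjCF_eq_div hL).symm.trans h) <;>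
    exact Int.isCoprime_iff_gcd_eq_one.mp ‹_›

def dualMat (W : Matrix (Fin 2) (Fin 2) ℤ) : Matrix (Fin 2) (Fin 2) ℤ :=
  !![1, 0; 1, -1] * W * !![1, -1; 0, -1]

lemma dualMat_apply (W : Matrix (Fin 2) (Fin 2) ℤ) :
    dualMat W = !![W 0 0, -W 0 0 - W 0 1; W 0 0 - W 1 0, W 1 0 + W 1 1 - W 0 0 - W 0 1] := by
  rw [dualMat, eta_fin_two W, mul_fin_two, mul_fin_two]
  simp only [of_apply, cons_val', cons_val_zero, cons_val_one, empty_val', cons_val_fin_one]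
  ring_nf

lemma det_dualMat (W : Matrix (Fin 2) (Fin 2) ℤ) : (dualMat W).det = W.det := by
  rw [dualMat, det_mul, det_mul, det_fin_two_of, det_fin_two_of]
  ring

theorem cfMat_eq_dualMat (hL : ∀ x ∈ L, 2 ≤ x) (hM : ∀ x ∈ M, 2 ≤ x) (hLne : L ≠ [])
    (hMne : M ≠ []) {P Q : ℤ} (hQ : 0 < Q) (hPQ : IsCoprime P Q) (hLv : hjCF L = P / Q)
    (hMv : hjCF M = P / (P - Q)) : cfMat M = dualMat (cfMat L) := by
  obtain ⟨hLP, hLQ⟩ := cfMat_col_zero_eq_of_hjCF_eq hL hLne hQ hPQ hLv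
  have hcL := (cfMat_col_zero_bounds hL).2
  have hbL := cfMat_zero_one_bounds hL hLne
  have hPQ' : IsCoprime P (P - Q) := by
    obtain ⟨u, v, h⟩ := hPQ
    exact ⟨u + v, -v, by linear_combination h⟩
  obtain ⟨hMP, hMQ⟩ :=
    cfMat_col_zero_eq_of_hjCF_eq hM hMne (by omega) hPQ' (by push_cast; exact hMv)
  have hbM := cfMat_zero_one_bounds hM hMne
  have hd00 : dualMat (cfMat L) 0 0 = cfMat L 0 0 := by simp [dualMat_apply]
  have hd01 : dualMat (cfMat L) 0 1 = -cfMat L 0 0 - cfMat L 0 1 := by simp [dualMat_apply]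
  have hd10 : dualMat (cfMat L) 1 0 = cfMat L 0 0 - cfMat L 1 0 := by simp [dualMat_apply]
  exact eq_of_det_eq_one_of_col_zero_eq_s2 (det_cfMat M) ((det_dualMat _).trans (det_cfMat L))
    (by omega) (by omega) ⟨by omega, by omega⟩ ⟨by omega, by omega⟩

lemma entryMat_add_one_mul_replicate_two_mul (x y : ℤ) (μ : ℕ) :
    entryMat (x + 1) * cfMat (List.replicate μ 2) * entryMat (y + 1) =
      entryMat x * !![1, -1; 0, -1] * entryMat (μ + 3) * !![1, 0; 1, -1] * entryMat y := by
  simp only [entryMat, cfMat_replicate_two, mul_fin_two]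
  ring_nf

theorem cfMat_concat_dualMat {A₁ A₂ : Matrix (Fin 2) (Fin 2) ℤ} {B C : List ℤ} {x y : ℤ}
    (hB : cfMat (B ++ [x]) = dualMat A₁) (hC : cfMat (y :: C) = dualMat A₂) (μ : ℕ) :
    cfMat (B ++ [x + 1] ++ List.replicate μ 2 ++ [y + 1] ++ C) =
      dualMat (A₁ * entryMat (μ + 3) * A₂) := by
  have hK : ∀ X : Matrix (Fin 2) (Fin 2) ℤ, X * !![1, -1; 0, -1] * !![1, -1; 0, -1] = X := by
    intro X; rw [Matrix.mul_assoc, mul_fin_two]; simp [← one_fin_two]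
  have hT : ∀ X : Matrix (Fin 2) (Fin 2) ℤ, X * !![1, 0; 1, -1] * !![1, 0; 1, -1] = X := by
    intro X; rw [Matrix.mul_assoc, mul_fin_two]; simp [← one_fin_two]
  calc cfMat (B ++ [x + 1] ++ List.replicate μ 2 ++ [y + 1] ++ C)
      = cfMat B * (entryMat (x + 1) * cfMat (List.replicate μ 2) * entryMat (y + 1)) *
          cfMat C := by simp only [cfMat_append, cfMat_singleton, Matrix.mul_assoc]
    _ = cfMat (B ++ [x]) * !![1, -1; 0, -1] * entryMat (μ + 3) * !![1, 0; 1, -1] *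
          cfMat (y :: C) := by
        rw [entryMat_add_one_mul_replicate_two_mul]
        simp only [cfMat_append, cfMat_cons, cfMat_nil, Matrix.mul_one, Matrix.mul_assoc]
    _ = dualMat (A₁ * entryMat (μ + 3) * A₂) := by
        rw [hB, hC, dualMat, dualMat, dualMat]
        simp only [← Matrix.mul_assoc, hK, hT]

lemma two_le_of_mem_concat {B C : List ℤ} {x y : ℤ} (hB : ∀ z ∈ B ++ [x], 2 ≤ z)
    (hC : ∀ z ∈ y :: C, 2 ≤ z) (μ : ℕ) :
    ∀ z ∈ B ++ [x + 1] ++ List.replicate μ 2 ++ [y + 1] ++ C, 2 ≤ z := by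
  simp only [List.mem_append, List.mem_cons, List.mem_replicate, List.not_mem_nil, or_false]
    at hB hC ⊢
  rintro z ((((hz | rfl) | ⟨-, rfl⟩) | rfl) | hz)
  · exact hB z (.inl hz)
  · linarith [hB x (.inr rfl)]
  · exact le_rfl
  · linarith [hC y (.inl rfl)]
  · exact hC z (.inr hz)

theorem hjCF_concat_dual {A₁ A₂ B C : List ℤ} {x y : ℤ} {μ : ℕ} {P Q P₁ Q₁ P₂ Q₂ : ℤ}
    (hv : hjCF (A₁ ++ [(μ : ℤ) + 3] ++ A₂) = P / Q) (hv₁ : hjCF A₁ = P₁ / Q₁)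
    (hv₂ : hjCF A₂ = P₂ / Q₂) (hBv : hjCF (B ++ [x]) = P₁ / (P₁ - Q₁))
    (hCv : hjCF (y :: C) = P₂ / (P₂ - Q₂))
    (hA₁ : ∀ z ∈ A₁, 2 ≤ z) (hA₂ : ∀ z ∈ A₂, 2 ≤ z) (hB : ∀ z ∈ B ++ [x], 2 ≤ z)
    (hC : ∀ z ∈ y :: C, 2 ≤ z) (hA₁ne : A₁ ≠ []) (hA₂ne : A₂ ≠ [])
    (hQ : 0 < Q) (hPQ : IsCoprime P Q) (hQ₁ : 0 < Q₁) (hPQ₁ : IsCoprime P₁ Q₁)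
    (hQ₂ : 0 < Q₂) (hPQ₂ : IsCoprime P₂ Q₂) :
    hjCF (B ++ [x + 1] ++ List.replicate μ 2 ++ [y + 1] ++ C) = P / (P - Q) := by
  have hA : ∀ z ∈ A₁ ++ [(μ : ℤ) + 3] ++ A₂, 2 ≤ z := by
    simp only [List.mem_append, List.mem_singleton]
    rintro z ((hz | rfl) | hz)
    exacts [hA₁ z hz, by omega, hA₂ z hz]
  have dual₁ := cfMat_eq_dualMat hA₁ hB hA₁ne (by simp) hQ₁ hPQ₁ hv₁ hBv
  have dual₂ := cfMat_eq_dualMat hA₂ hC hA₂ne (by simp) hQ₂ hPQ₂ hv₂ hCv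
  obtain ⟨hP, hQ'⟩ := cfMat_col_zero_eq_of_hjCF_eq hA (by simp) hQ hPQ hv
  rw [hjCF_eq_div (two_le_of_mem_concat hB hC μ), cfMat_concat_dualMat dual₁ dual₂,
    ← cfMat_singleton, ← cfMat_append, ← cfMat_append, dualMat_apply, hP, hQ']
  simp

end HirzebruchJung

open HirzebruchJung

theorem stmt2_general (n : ℕ) (a : ℕ → ℤ) (ha : ∀ i < n, 2 ≤ a i)
    (s : ℕ) (hs1 : 1 ≤ s) (hs2 : s ≤ n - 2) (has : 3 ≤ a s)
    (p q p₁ q₁ p₂ q₂ : ℕ)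
    (hpq : Nat.Coprime p q) (hq : 1 ≤ q)
    (hp₁q₁ : Nat.Coprime p₁ q₁) (hq₁ : 1 ≤ q₁)
    (hp₂q₂ : Nat.Coprime p₂ q₂) (hq₂ : 1 ≤ q₂)
    (hpqv : (p : ℚ) / q = hjCF ((List.range n).map fun i => a i))
    (hp1v : (p₁ : ℚ) / q₁ = hjCF ((List.range s).map fun i => a i))
    (hp2v : (p₂ : ℚ) / q₂ = hjCF ((List.range (n - s - 1)).map fun i => a (s + 1 + i)))
    (k l : ℕ) (hk : 1 ≤ k) (hl : 1 ≤ l)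
    (b c : ℕ → ℤ) (hb : ∀ i < k, 2 ≤ b i) (hc : ∀ i < l, 2 ≤ c i)
    (hbv : (p₁ : ℚ) / ((p₁ : ℚ) - q₁) = hjCF ((List.range k).map fun i => b i))
    (hcv : (p₂ : ℚ) / ((p₂ : ℚ) - q₂) = hjCF ((List.range l).map fun i => c i)) :
    (p : ℚ) / ((p : ℚ) - q) =
      hjCF ((List.range (k - 1)).map (fun i => b i) ++ [b (k - 1) + 1] ++
        List.replicate ((a s).toNat - 3) (2 : ℤ) ++ [c 0 + 1] ++
        (List.range (l - 1)).map fun i => c (i + 1)) := by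
  rw [List.map_range_split _ (by omega : s < n),
    show a s = (((a s).toNat - 3 : ℕ) : ℤ) + 3 by omega] at hpqv
  rw [List.map_range_eq_concat _ hk] at hbv
  rw [List.map_range_eq_cons _ hl] at hcv
  have := hjCF_concat_dual (by push_cast; exact hpqv.symm) (by push_cast; exact hp1v.symm)
    (by push_cast; exact hp2v.symm) (by push_cast; exact hbv.symm) (by push_cast; exact hcv.symm)
    (by simpa using fun i hi => ha i (by omega))
    (by simpa using fun i hi => ha (s + 1 + i) (by omega))
    (by rw [← List.map_range_eq_concat _ hk]; simpa using hb)
    (by rw [← List.map_range_eq_cons _ hl]; simpa using hc) (by simp; omega) (by simp; omega)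
    (by exact_mod_cast hq) (Nat.isCoprime_iff_coprime.mpr hpq)
    (by exact_mod_cast hq₁) (Nat.isCoprime_iff_coprime.mpr hp₁q₁)
    (by exact_mod_cast hq₂) (Nat.isCoprime_iff_coprime.mpr hp₂q₂)
  exact_mod_cast this.symm

/-- Indices are 0-based: the chain is `a 0, …, a (n-1)`, the removed entry is `a s`
with `1 ≤ s ≤ n - 2` (i.e. `1 < s < n` in 1-based indexing). -/
theorem stmt2 (n : ℕ) (hn : 3 ≤ n) (a : ℕ → ℤ) (ha : ∀ i < n, 2 ≤ a i)
    (s : ℕ) (hs1 : 1 ≤ s) (hs2 : s ≤ n - 2) (has : 3 ≤ a s)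
    (p q p₁ q₁ p₂ q₂ : ℕ)
    (hpq : Nat.Coprime p q) (hq : 1 ≤ q) (hqp : q < p)
    (hp₁q₁ : Nat.Coprime p₁ q₁) (hq₁ : 1 ≤ q₁) (hq₁p₁ : q₁ < p₁)
    (hp₂q₂ : Nat.Coprime p₂ q₂) (hq₂ : 1 ≤ q₂) (hq₂p₂ : q₂ < p₂)
    (hpqv : (p : ℚ) / q = hjCF ((List.range n).map fun i => a i))
    (hp1v : (p₁ : ℚ) / q₁ = hjCF ((List.range s).map fun i => a i))
    (hp2v : (p₂ : ℚ) / q₂ = hjCF ((List.range (n - s - 1)).map fun i => a (s + 1 + i)))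
    (k l : ℕ) (hk : 1 ≤ k) (hl : 1 ≤ l)
    (b c : ℕ → ℤ) (hb : ∀ i < k, 2 ≤ b i) (hc : ∀ i < l, 2 ≤ c i)
    (hbv : (p₁ : ℚ) / ((p₁ : ℚ) - q₁) = hjCF ((List.range k).map fun i => b i))
    (hcv : (p₂ : ℚ) / ((p₂ : ℚ) - q₂) = hjCF ((List.range l).map fun i => c i)) :
    (p : ℚ) / ((p : ℚ) - q) =
      hjCF ((List.range (k - 1)).map (fun i => b i) ++ [b (k - 1) + 1] ++
        List.replicate ((a s).toNat - 3) (2 : ℤ) ++ [c 0 + 1] ++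
        (List.range (l - 1)).map fun i => c (i + 1)) :=
  stmt2_general n a ha s hs1 hs2 has p q p₁ q₁ p₂ q₂ hpq hq hp₁q₁ hq₁ hp₂q₂ hq₂ hpqv hp1v hp2v k l
    hk hl b c hb hc hbv hcv
end

section
/- If (n_1,…,n_k) and (m_1,…,m_l) are null sequences of integers, then the sequence (n_1,…,n_{k−1}, n_k + m_1, m_2,…,m_l) is also a null sequence. -/
/-- `l'` is a strict blowup of `l`: either an interior blowup
`(n₁,…,n_{s−1}, n_s+1, 1, n_{s+1}+1, n_{s+2},…,n_k)` for some `1 ≤ s ≤ k−1`,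
or the end blowup `(n₁,…,n_{k−1}, n_k+1, 1)`. -/
def IsStrictBlowup (l l' : List ℤ) : Prop :=
  (∃ (A B : List ℤ) (a b : ℤ), l = A ++ a :: b :: B ∧
      l' = A ++ (a + 1) :: 1 :: (b + 1) :: B) ∨
  (∃ (A : List ℤ) (a : ℤ), l = A ++ [a] ∧ l' = A ++ [a + 1, 1])

/-- A null sequence is a finite integer sequence obtained from the one-term
sequence `(0)` by finitely many strict blowups. -/
def IsNullSeq (l : List ℤ) : Prop :=
  Relation.ReflTransGen IsStrictBlowup [0] l

theorem stmt4 (N M : List ℤ) (nk m₁ : ℤ)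
    (hN : IsNullSeq (N ++ [nk])) (hM : IsNullSeq (m₁ :: M)) :
    IsNullSeq (N ++ (nk + m₁) :: M) := by
  suffices h : ∀ l, IsNullSeq l → ∀ m₁ M, l = m₁ :: M →
      IsNullSeq (N ++ (nk + m₁) :: M) from h _ hM m₁ M rfl
  intro l hl
  induction hl with
  | refl =>
    rintro m₁ M h
    injection h with h1 h2
    subst h1; subst h2
    simpa using hN
  | tail hRT hstep ih =>
    rintro m₁ M rfl
    rcases hstep with ⟨A, B, a, b', hb₁, hb₂⟩ | ⟨A, a, hb₁, hb₂⟩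
    · cases A with
      | nil =>
        simp only [List.nil_append] at hb₁ hb₂
        injection hb₂ with h1 h2
        subst h1; subst h2
        have := ih a (b' :: B) hb₁
        have hstep' : IsStrictBlowup (N ++ (nk + a) :: b' :: B)
            (N ++ (nk + (a + 1)) :: 1 :: (b' + 1) :: B) := by
          left
          exact ⟨N, B, nk + a, b', rfl, by ring_nf⟩
        exact this.tail hstep'
      | cons x A' =>
        simp only [List.cons_append] at hb₂
        injection hb₂ with h1 h2
        subst h1; subst h2
        have := ih m₁ (A' ++ a :: b' :: B) (by simpa using hb₁)
        have hstep' : IsStrictBlowup (N ++ (nk + m₁) :: (A' ++ a :: b' :: B))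
            (N ++ (nk + m₁) :: (A' ++ (a + 1) :: 1 :: (b' + 1) :: B)) := by
          left
          exact ⟨N ++ (nk + m₁) :: A', B, a, b', by simp, by simp⟩
        exact this.tail hstep'
    · cases A with
      | nil =>
        simp only [List.nil_append] at hb₁ hb₂
        injection hb₂ with h1 h2
        subst h1; subst h2
        have := ih a [] hb₁
        have hstep' : IsStrictBlowup (N ++ [nk + a]) (N ++ (nk + (a + 1)) :: [1]) := by
          right
          exact ⟨N, nk + a, rfl, by ring_nf⟩
        exact this.tail hstep'
      | cons x A' =>
        simp only [List.cons_append] at hb₂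
        injection hb₂ with h1 h2
        subst h1; subst h2
        have := ih m₁ (A' ++ [a]) (by simpa using hb₁)
        have hstep' : IsStrictBlowup (N ++ (nk + m₁) :: (A' ++ [a]))
            (N ++ (nk + m₁) :: (A' ++ [a + 1, 1])) := by
          right
          exact ⟨N ++ (nk + m₁) :: A', a, by simp, by simp⟩
        exact this.tail hstep'
end

section
/- If (n_1,…,n_k) and (m_1,…,m_l) are null sequences of integers, then for every integer t ≥ 0 the sequence (n_1,…,n_{k−1}, n_k + 1, 2,…,2, m_1 + 1, m_2,…,m_l), containing exactly t entries equal to 2 between n_k + 1 and m_1 + 1, is also a null sequence. -/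
lemma base_lem (P : List ℤ) (x : ℤ) (h : IsNullSeq (P ++ [x])) (t : ℕ) :
    IsNullSeq (P ++ (x + 1) :: (List.replicate t (2 : ℤ) ++ [1])) := by
  induction t with
  | zero =>
    refine h.tail (Or.inr ⟨P, x, rfl, by simp⟩)
  | succ t ih =>
    refine ih.tail (Or.inr ⟨P ++ (x + 1) :: List.replicate t 2, 1, by simp, ?_⟩)
    simp [List.replicate_succ']

lemma main_lem (L : List ℤ) (hL : IsNullSeq L) :
    ∀ (N : List ℤ) (nk : ℤ), IsNullSeq (N ++ [nk]) →
    ∀ (m₁ : ℤ) (M : List ℤ), L = m₁ :: M →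
    ∀ t : ℕ, IsNullSeq (N ++ (nk + 1) :: (List.replicate t (2 : ℤ) ++ (m₁ + 1) :: M)) := by
  induction hL with
  | refl =>
    intro N nk hN m₁ M hEq t
    obtain ⟨rfl, rfl⟩ : 0 = m₁ ∧ ([] : List ℤ) = M := by simpa using hEq
    simpa using base_lem N nk hN t
  | tail hab hbc ih =>
    intro N nk hN m₁ M hEq t
    rcases hbc with ⟨A, B, a, x, hb, hc⟩ | ⟨A, a, hb, hc⟩
    · cases A with
      | nil =>
        simp only [List.nil_append] at hb hc
        subst hb
        rw [hc] at hEq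
        obtain ⟨rfl, rfl⟩ : a + 1 = m₁ ∧ 1 :: (x + 1) :: B = M := by simpa using hEq
        refine (ih N nk hN a (x :: B) rfl t).tail ?_
        exact Or.inl ⟨N ++ (nk + 1) :: List.replicate t 2, B, a + 1, x, by simp, by simp⟩
      | cons c A' =>
        simp only [List.cons_append] at hb hc
        subst hb
        rw [hc] at hEq
        obtain ⟨rfl, rfl⟩ : c = m₁ ∧ A' ++ (a + 1) :: 1 :: (x + 1) :: B = M := by
          simpa using hEq
        refine (ih N nk hN c (A' ++ a :: x :: B) rfl t).tail ?_
        exact Or.inl ⟨N ++ (nk + 1) :: (List.replicate t 2 ++ (c + 1) :: A'), B, a, x,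
          by simp, by simp⟩
    · cases A with
      | nil =>
        simp only [List.nil_append] at hb hc
        subst hb
        rw [hc] at hEq
        obtain ⟨rfl, rfl⟩ : a + 1 = m₁ ∧ [(1 : ℤ)] = M := by simpa using hEq
        refine (ih N nk hN a [] rfl t).tail ?_
        exact Or.inr ⟨N ++ (nk + 1) :: List.replicate t 2, a + 1, by simp, by simp⟩
      | cons c A' =>
        simp only [List.cons_append] at hb hc
        subst hb
        rw [hc] at hEq
        obtain ⟨rfl, rfl⟩ : c = m₁ ∧ A' ++ [a + 1, 1] = M := by simpa using hEq
        refine (ih N nk hN c (A' ++ [a]) rfl t).tail ?_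
        exact Or.inr ⟨N ++ (nk + 1) :: (List.replicate t 2 ++ (c + 1) :: A'), a,
          by simp, by simp⟩

theorem stmt5 (N M : List ℤ) (nk m₁ : ℤ)
    (hN : IsNullSeq (N ++ [nk])) (hM : IsNullSeq (m₁ :: M)) (t : ℕ) :
    IsNullSeq (N ++ (nk + 1) :: (List.replicate t (2 : ℤ) ++ (m₁ + 1) :: M)) := by
  exact main_lem _ hM N nk hN m₁ M rfl t
end

section
/- Every null sequence (n_1,…,n_k) of length k ≥ 2 satisfies n_1 + n_2 + ⋯ + n_k ≥ 2k − 2, with equality if and only if n_1 = n_k = 1 and n_i = 2 for all 1 < i < k (that is, the sequence is (1,2,…,2,1)). -/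
lemma formSum (n : ℕ) : ((1:ℤ) :: (List.replicate n (2:ℤ) ++ [(1:ℤ)])).sum = 2*n + 2 := by
  simp [List.sum_replicate]; ring

lemma concat_inj {A C : List ℤ} {a c : ℤ} (h : A ++ [a] = C ++ [c]) : A = C ∧ a = c := by
  have := List.append_inj' h rfl; simpa using this

lemma key (l : List ℤ) (hl : IsNullSeq l) :
    l = [0] ∨ (2 ≤ l.length ∧ 2*(l.length:ℤ) - 2 ≤ l.sum ∧
      (l.sum = 2*(l.length:ℤ) - 2 ↔ l = 1 :: (List.replicate (l.length-2) (2:ℤ) ++ [1]))) := by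
  induction hl with
  | refl => left; rfl
  | @tail m c hm hmc ih =>
    right
    rcases hmc with ⟨A, B, a, b, hm1, hc⟩ | ⟨A, a, hm1, hc⟩
    · -- interior blowup
      have hmne : m ≠ [0] := by
        intro h; rw [h] at hm1
        have := congrArg List.length hm1; simp at this; omega
      rcases ih with h0 | ⟨hlen, hsum, hiff⟩
      · exact absurd h0 hmne
      have hlenc : c.length = m.length + 1 := by
        rw [hm1, hc]; simp; omega
      have hsumc : c.sum = m.sum + 3 := by
        rw [hm1, hc]; simp; ring
      have hlen2 : 2 ≤ c.length := by omega
      refine ⟨hlen2, ?_, ?_⟩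
      · rw [hsumc, hlenc]; push_cast; linarith
      · constructor
        · intro h; exfalso
          rw [hsumc, hlenc] at h; push_cast at h; linarith
        · intro h; exfalso
          have hs := congrArg List.sum h
          rw [formSum] at hs
          have hcast : ((c.length - 2 : ℕ) : ℤ) = (c.length : ℤ) - 2 := by
            have := hlen2; push_cast [Nat.cast_sub this]; ring
          rw [hcast] at hs
          rw [hsumc, hlenc] at hs; push_cast at hs; linarith
    · -- end blowup
      have hlenc : c.length = m.length + 1 := by rw [hm1, hc]; simp
      have hsumc : c.sum = m.sum + 2 := by rw [hm1, hc]; simp; ring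
      rcases ih with h0 | ⟨hlen, hsum, hiff⟩
      · -- m = [0]
        have hA : A = ([] : List ℤ) ∧ a = 0 := by
          have h1 : A ++ [a] = ([] : List ℤ) ++ [0] := by
            rw [← hm1, h0]; rfl
          have := concat_inj h1; simpa using this
        have hc2 : c = [1, 1] := by rw [hc, hA.1, hA.2]; norm_num
        subst hc2
        refine ⟨by norm_num, by norm_num, ?_⟩
        constructor
        · intro _; norm_num
        · intro _; norm_num
      · have hlen2 : 2 ≤ c.length := by omega
        set n := m.length - 2 with hn
        have hnl : m.length = n + 2 := by omega
        have hcl : c.length - 2 = n + 1 := by omega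
        refine ⟨hlen2, ?_, ?_⟩
        · rw [hsumc, hlenc]; push_cast; linarith
        · constructor
          · intro h
            have hms : m.sum = 2*(m.length:ℤ) - 2 := by
              rw [hsumc, hlenc] at h; push_cast at h; linarith
            have hform := hiff.mp hms
            have h1 : A ++ [a] = (1 :: List.replicate n (2:ℤ)) ++ [1] := by
              rw [← hm1, hform]; simp
            obtain ⟨hA, ha⟩ := concat_inj h1
            rw [hcl, hc, hA, ha]
            simp [List.replicate_succ']
          · intro h
            rw [hcl] at h
            have h1' : A ++ [a+1, 1] = 1 :: (List.replicate (n+1) (2:ℤ) ++ [1]) := by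
              rw [← hc, h]
            have h1 : (A ++ [a+1]) ++ [1] = (1 :: List.replicate (n+1) (2:ℤ)) ++ [1] := by
              simpa using h1'
            obtain ⟨h2, -⟩ := concat_inj h1
            have h3 : A ++ [a+1] = (1 :: List.replicate n (2:ℤ)) ++ [2] := by
              rw [h2]; simp [List.replicate_succ']
            obtain ⟨hA, ha⟩ := concat_inj h3
            have ha' : a = 1 := by linarith
            have hmform : m = 1 :: (List.replicate n (2:ℤ) ++ [1]) := by
              rw [hm1, hA, ha']; simp
            have := hiff.mpr hmform
            rw [hsumc, hlenc]; push_cast; linarith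

theorem stmt6 (l : List ℤ) (hl : IsNullSeq l) (hlen : 2 ≤ l.length) :
    2 * (l.length : ℤ) - 2 ≤ l.sum ∧
      (l.sum = 2 * (l.length : ℤ) - 2 ↔
        l = 1 :: (List.replicate (l.length - 2) (2 : ℤ) ++ [1])) := by
  rcases key l hl with h0 | ⟨-, h1, h2⟩
  · rw [h0] at hlen; simp at hlen
  · exact ⟨h1, h2⟩
end

section
/- Let (n_1,…,n_k) and (n'_1,…,n'_{k'}) be null sequences, each having exactly one entry equal to 1, located at position i in the first sequence and at position i' in the second. If the list obtained from (n_1,…,n_k) by replacing its entry 1 with 2 equals the list obtained from (n'_1,…,n'_{k'}) by replacing its entry 1 with 2, then k = k', i = i', and (n_1,…,n_k) = (n'_1,…,n'_{k'}). -/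
namespace List

variable {α : Type*}

theorem exists_eq_append_cons_of_set_eq {l l' : List α} {i i' : ℕ} {a b : α}
    (hii : i < i') (hi : l[i]? = some a) (hi' : l'[i']? = some a)
    (h : l.set i b = l'.set i' b) :
    ∃ C D E, l = C ++ a :: (D ++ b :: E) ∧ l' = C ++ b :: (D ++ a :: E) := by
  obtain ⟨hil, rfl⟩ := getElem?_eq_some_iff.mp hi
  obtain ⟨hil', ha⟩ := getElem?_eq_some_iff.mp hi'
  obtain ⟨C, R, hl, hC, hs⟩ := exists_of_set (a' := b) hil
  obtain ⟨C', R', hl', hC', hs'⟩ := exists_of_set (a' := b) hil'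
  rw [hs, hs'] at h
  rcases append_eq_append_iff.mp h with ⟨X, rfl, hX⟩ | ⟨X, rfl, -⟩
  · rcases cons_eq_append_iff.mp hX with ⟨rfl, -⟩ | ⟨D, rfl, rfl⟩
    · simp only [append_nil] at hC'
      omega
    · exact ⟨C, D, R', by simpa using hl, by simpa [ha] using hl'⟩
  · simp only [length_append] at hC
    omega

theorem set_eq_self_of_getElem?_eq {l : List α} {i : ℕ} {a : α}
    (h : l[i]? = some a) : l.set i a = l := by
  obtain ⟨hil, rfl⟩ := getElem?_eq_some_iff.mp h
  exact set_getElem_self hil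

end List

def contStep (v : ℤ × ℤ) (n : ℤ) : ℤ × ℤ := (v.2, n * v.2 - v.1)

theorem contStep_add (v w : ℤ × ℤ) (n : ℤ) :
    contStep (v + w) n = contStep v n + contStep w n := by
  ext
  · rfl
  · simp only [contStep, Prod.fst_add, Prod.snd_add]; ring

theorem contStep_smul (c : ℤ) (v : ℤ × ℤ) (n : ℤ) : contStep (c • v) n = c • contStep v n := by
  ext
  · rfl
  · simp only [contStep, Prod.smul_fst, Prod.smul_snd, smul_eq_mul]; ring

theorem contStep_add_one (v : ℤ × ℤ) (n : ℤ) :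
    contStep v (n + 1) = contStep v n + v.2 • ((0 : ℤ), (1 : ℤ)) := by
  simp only [contStep, Prod.smul_mk, smul_eq_mul, Prod.mk_add_mk, Prod.mk.injEq]
  constructor <;> ring

theorem contStep_injective (n : ℤ) : Function.Injective (contStep · n) := by
  intro v w h
  obtain ⟨h₂, h₁⟩ := Prod.mk.inj h
  rw [h₂] at h₁
  exact Prod.ext (by linarith) h₂

theorem foldl_contStep_add (l : List ℤ) (v w : ℤ × ℤ) :
    l.foldl contStep (v + w) = l.foldl contStep v + l.foldl contStep w := by
  induction l generalizing v w with
  | nil => rfl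
  | cons n l ih => simp only [List.foldl_cons, contStep_add, ih]

theorem foldl_contStep_smul (l : List ℤ) (c : ℤ) (v : ℤ × ℤ) :
    l.foldl contStep (c • v) = c • l.foldl contStep v := by
  induction l generalizing v with
  | nil => rfl
  | cons n l ih => simp only [List.foldl_cons, contStep_smul, ih]

theorem foldl_contStep_injective (l : List ℤ) : Function.Injective (l.foldl contStep) := by
  induction l with
  | nil => exact Function.injective_id
  | cons n l ih => exact ih.comp (contStep_injective n)

theorem contStep_blowup (v : ℤ × ℤ) (a b : ℤ) :
    contStep (contStep (contStep v (a + 1)) 1) (b + 1) = contStep (contStep v a) b := by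
  simp only [contStep, Prod.mk.injEq]
  constructor <;> ring

theorem nonneg_and_fst_lt_snd_foldl_contStep {D : List ℤ} (hD : ∀ x ∈ D, 2 ≤ x) {v : ℤ × ℤ}
    (h₀ : 0 ≤ v.1) (h₁ : v.1 < v.2) :
    0 ≤ (D.foldl contStep v).1 ∧ (D.foldl contStep v).1 < (D.foldl contStep v).2 := by
  induction D generalizing v with
  | nil => exact ⟨h₀, h₁⟩
  | cons n D ih =>
    have hn : 2 ≤ n := hD n List.mem_cons_self
    exact ih (fun x hx => hD x (List.mem_cons_of_mem n hx)) (by simp only [contStep]; linarith)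
      (by simp only [contStep]; nlinarith)

def PrefixContinuantsPos : ℤ × ℤ → List ℤ → Prop
  | _, [] => True
  | v, n :: l => 0 < v.2 ∧ PrefixContinuantsPos (contStep v n) l

theorem prefixContinuantsPos_append {v : ℤ × ℤ} {A B : List ℤ} :
    PrefixContinuantsPos v (A ++ B) ↔
      PrefixContinuantsPos v A ∧ PrefixContinuantsPos (A.foldl contStep v) B := by
  induction A generalizing v with
  | nil => simp [PrefixContinuantsPos]
  | cons n A ih => simp [PrefixContinuantsPos, ih, and_assoc]

namespace IsStrictBlowup

variable {l l' : List ℤ}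

theorem one_le_of_mem (h : IsStrictBlowup l l') (hl : ∀ x ∈ l, 1 ≤ x) : ∀ x ∈ l', 1 ≤ x := by
  rcases h with ⟨A, B, a, b, rfl, rfl⟩ | ⟨A, a, rfl, rfl⟩
  · have := hl a (by simp)
    have := hl b (by simp)
    intro x hx
    simp only [List.mem_append, List.mem_cons] at hx
    rcases hx with hx | rfl | rfl | rfl | hx
    all_goals first | omega | exact hl x (by simp [hx])
  · have := hl a (by simp)
    intro x hx
    simp only [List.mem_append, List.mem_cons, List.not_mem_nil, or_false] at hx
    rcases hx with hx | rfl | rfl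
    all_goals first | omega | exact hl x (by simp [hx])

theorem eq_one_one_of_zero (h : IsStrictBlowup [0] l') : l' = [1, 1] := by
  rcases h with ⟨A, B, a, b, hl, -⟩ | ⟨A, a, hl, rfl⟩
  · have := congrArg List.length hl
    simp only [List.length_cons, List.length_nil, List.length_append] at this
    omega
  · rcases List.singleton_eq_append_iff.mp hl with ⟨rfl, h⟩ | ⟨-, h⟩
    · simp_all
    · exact absurd h (List.cons_ne_nil a [])

theorem foldl_contStep_and_prefixContinuantsPos {v : ℤ × ℤ} (h : IsStrictBlowup l l')
    (hv : l.foldl contStep v = (1, 0)) (hpos : PrefixContinuantsPos v l) :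
    l'.foldl contStep v = (1, 0) ∧ PrefixContinuantsPos v l' := by
  rcases h with ⟨A, B, a, b, rfl, rfl⟩ | ⟨A, a, rfl, rfl⟩
  · simp only [List.foldl_append, List.foldl_cons, contStep_blowup] at hv ⊢
    simp only [prefixContinuantsPos_append, PrefixContinuantsPos, contStep_blowup] at hpos ⊢
    refine ⟨hv, hpos.1, hpos.2.1, ?_, ?_, hpos.2.2.2⟩ <;>
      simp only [contStep] at hpos ⊢ <;> linarith
  · simp only [List.foldl_append, List.foldl_cons, List.foldl_nil] at hv ⊢
    simp only [prefixContinuantsPos_append, PrefixContinuantsPos] at hpos ⊢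
    simp only [contStep, Prod.mk.injEq] at hv ⊢
    refine ⟨⟨?_, ?_⟩, hpos.1, hpos.2.1, ?_, trivial⟩ <;> linarith

end IsStrictBlowup

namespace IsNullSeq

variable {l : List ℤ}

theorem foldl_contStep_and_prefixContinuantsPos (hl : IsNullSeq l) :
    l.foldl contStep (0, 1) = (1, 0) ∧ PrefixContinuantsPos (0, 1) l := by
  induction hl with
  | refl => exact ⟨by simp [contStep], by simp [PrefixContinuantsPos]⟩
  | tail _ h ih => exact h.foldl_contStep_and_prefixContinuantsPos ih.1 ih.2

theorem eq_zero_or_one_le (hl : IsNullSeq l) : l = [0] ∨ ∀ x ∈ l, 1 ≤ x := by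
  induction hl with
  | refl => exact Or.inl rfl
  | tail _ h ih =>
    rcases ih with rfl | ih
    · simp [h.eq_one_one_of_zero]
    · exact Or.inr (h.one_le_of_mem ih)

theorem two_le_of_mem (hl : IsNullSeq l) (h1 : 1 ∈ l) {x : ℤ} (hx : x ∈ l) (hx1 : x ≠ 1) :
    2 ≤ x := by
  rcases hl.eq_zero_or_one_le with rfl | h
  · simp at h1
  · have := h x hx
    omega

theorem not_swap {C D E : List ℤ} (h₁ : IsNullSeq (C ++ 1 :: (D ++ 2 :: E))) (hD : 1 ∉ D) :
    ¬ IsNullSeq (C ++ 2 :: (D ++ 1 :: E)) := by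
  intro h₂
  have hD₂ : ∀ x ∈ D, 2 ≤ x := fun x hx =>
    h₁.two_le_of_mem (by simp) (by simp [hx]) (by rintro rfl; exact hD hx)
  obtain ⟨hend₁, hpos⟩ := h₁.foldl_contStep_and_prefixContinuantsPos
  have hend₂ := h₂.foldl_contStep_and_prefixContinuantsPos.1
  set w := C.foldl contStep (0, 1)
  have hw : 0 < w.2 := (prefixContinuantsPos_append.mp hpos).2.1
  simp only [List.foldl_append, List.foldl_cons] at hend₁ hend₂
  have hstate : contStep (D.foldl contStep (contStep w 1)) 2 =
      contStep (D.foldl contStep (contStep w 2)) 1 :=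
    foldl_contStep_injective E (hend₁.trans hend₂.symm)
  have hlin : D.foldl contStep (contStep w 2) =
      D.foldl contStep (contStep w 1) + w.2 • D.foldl contStep (0, 1) := by
    rw [show (2 : ℤ) = 1 + 1 by norm_num, contStep_add_one, foldl_contStep_add,
      foldl_contStep_smul]
  have hDpos := nonneg_and_fst_lt_snd_foldl_contStep hD₂ (v := (0, 1)) le_rfl zero_lt_one
  rw [hlin] at hstate
  have := congrArg Prod.fst hstate
  simp only [contStep, Prod.snd_add, Prod.smul_snd, smul_eq_mul] at this
  nlinarith

theorem eq_of_set_two_eq {l' : List ℤ} (hl : IsNullSeq l) (hl' : IsNullSeq l')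
    (hc : l.count 1 = 1) {i i' : ℕ} (hi : l[i]? = some 1) (hi' : l'[i']? = some 1)
    (h : l.set i 2 = l'.set i' 2) : i = i' := by
  have h21 : (2 : ℤ) ≠ 1 := by norm_num
  by_contra hne
  rcases Nat.lt_or_gt_of_ne hne with hii | hii
  · obtain ⟨C, D, E, rfl, rfl⟩ := List.exists_eq_append_cons_of_set_eq hii hi hi' h
    refine hl.not_swap (fun hD => ?_) hl'
    have := List.count_pos_iff.mpr hD
    simp only [List.count_append, List.count_cons_self, List.count_cons_of_ne h21] at hc
    omega
  · obtain ⟨C, D, E, rfl, rfl⟩ := List.exists_eq_append_cons_of_set_eq hii hi' hi h.symm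
    refine hl'.not_swap (fun hD => ?_) hl
    have := List.count_pos_iff.mpr hD
    simp only [List.count_append, List.count_cons_self, List.count_cons_of_ne h21] at hc
    omega

end IsNullSeq

theorem stmt8_general (l l' : List ℤ) (hl : IsNullSeq l) (hl' : IsNullSeq l')
    (hc : l.count 1 = 1)
    (i i' : ℕ)
    (hi : l.getD i 0 = 1) (hi' : l'.getD i' 0 = 1)
    (heq : l.set i 2 = l'.set i' 2) :
    l.length = l'.length ∧ i = i' ∧ l = l' := by
  have hi₁ : l[i]? = some 1 := by simpa [List.getD_eq_getElem?_getD, Option.getD_eq_iff] using hi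
  have hi₁' : l'[i']? = some 1 := by
    simpa [List.getD_eq_getElem?_getD, Option.getD_eq_iff] using hi'
  obtain rfl := hl.eq_of_set_two_eq hl' hc hi₁ hi₁' heq
  refine ⟨by simpa using congrArg List.length heq, rfl, ?_⟩
  calc l = (l.set i 2).set i 1 := by rw [List.set_set, List.set_eq_self_of_getElem?_eq hi₁]
    _ = (l'.set i 2).set i 1 := by rw [heq]
    _ = l' := by rw [List.set_set, List.set_eq_self_of_getElem?_eq hi₁']

theorem stmt8 (l l' : List ℤ) (hl : IsNullSeq l) (hl' : IsNullSeq l')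
    (hc : l.count 1 = 1) (hc' : l'.count 1 = 1)
    (i i' : ℕ) (hil : i < l.length) (hil' : i' < l'.length)
    (hi : l.getD i 0 = 1) (hi' : l'.getD i' 0 = 1)
    (heq : l.set i 2 = l'.set i' 2) :
    l.length = l'.length ∧ i = i' ∧ l = l' :=
  stmt8_general l l' hl hl' hc i i' hi hi' heq
end

section
/- Every null sequence of length at least 3 with exactly one entry equal to 1 can be obtained from the sequence (2,1,2) by a finite chain of strict blowups in which every intermediate sequence has exactly one entry equal to 1 and each blowup is performed either at the index immediately preceding the unique entry equal to 1 (a blowup at s = i−1, where i is the position of the unique 1) or at the index of the unique entry equal to 1 (a blowup at s = i). -/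
/-- The strict blowup of `l` at the 1-based index `s`, `1 ≤ s ≤ l.length`:
for `s < l.length` it is `(n₁,…,n_{s−1}, n_s+1, 1, n_{s+1}+1, n_{s+2},…,n_k)`,
and for `s = l.length` it is `(n₁,…,n_{k−1}, n_k+1, 1)`. -/
def blowupAt (l : List ℤ) (s : ℕ) : List ℤ :=
  if s = l.length then l.take (s - 1) ++ [l.getD (s - 1) 0 + 1, 1]
  else l.take (s - 1) ++ [l.getD (s - 1) 0 + 1, 1, l.getD s 0 + 1] ++ l.drop (s + 1)

/-! Apart from `(0)` and `(1, 1)`, every null sequence has positive entries, contains a `1` and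
has no two adjacent `1`s, and strict blowups preserve this. A strict blowup at `s` turns the
entries `a, b` at positions `s, s + 1` into `a + 1, b + 1`, neither of which is `1`, and inserts
one new `1`. So if the blown-up sequence has a unique `1`, the sequence before it had a unique
`1` too, and that `1` was `a` or `b`: the blowup happened just before or at it. Following the
blowups back from the given sequence, the first one of length `3` is `(2, 1, 2)`. -/

theorem Relation.ReflTransGen.exists_seq {α : Type*} {r : α → α → Prop} {a b : α}
    (h : Relation.ReflTransGen r a b) :
    ∃ (n : ℕ) (f : ℕ → α), f 0 = a ∧ f n = b ∧ ∀ j < n, r (f j) (f (j + 1)) := by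
  induction h with
  | refl => exact ⟨0, fun _ => a, rfl, rfl, by simp⟩
  | @tail b c _ hbc ih =>
    obtain ⟨n, f, hf0, hfn, hf⟩ := ih
    refine ⟨n + 1, fun j => if j ≤ n then f j else c, by simpa using hf0, by simp, ?_⟩
    intro j hj
    rcases Nat.lt_or_eq_of_le (Nat.lt_succ_iff.mp hj) with hj | rfl
    · simpa [hj.le, Nat.succ_le_of_lt hj] using hf j hj
    · simpa [hfn] using hbc

theorem blowupAt_append_cons_cons (A B : List ℤ) (a b : ℤ) :
    blowupAt (A ++ a :: b :: B) (A.length + 1) = A ++ (a + 1) :: 1 :: (b + 1) :: B := by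
  rw [blowupAt, if_neg (by simp)]
  simp [List.drop_append, show A.length + 1 + 1 - A.length = 2 by omega,
    show A.length ≤ A.length + 1 + 1 by omega]

theorem blowupAt_append_singleton (A : List ℤ) (a : ℤ) :
    blowupAt (A ++ [a]) (A.length + 1) = A ++ [a + 1, 1] := by
  rw [blowupAt, if_pos (by simp)]
  simp

theorem isStrictBlowup_singleton_iff {a : ℤ} {l : List ℤ} :
    IsStrictBlowup [a] l ↔ l = [a + 1, 1] := by
  constructor
  · rintro (⟨A, B, a', b', he, -⟩ | ⟨A, a', he, rfl⟩)
    · have := congrArg List.length he; simp at this; omega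
    · rcases A with _ | ⟨x, _ | ⟨y, A⟩⟩ <;> simp_all
  · rintro rfl
    exact Or.inr ⟨[], a, rfl, rfl⟩

theorem isStrictBlowup_pair_iff {a b : ℤ} {l : List ℤ} :
    IsStrictBlowup [a, b] l ↔ l = [a + 1, 1, b + 1] ∨ l = [a, b + 1, 1] := by
  constructor
  · rintro (⟨A, B, a', b', he, rfl⟩ | ⟨A, a', he, rfl⟩)
    · rcases A with _ | ⟨x, _ | ⟨y, A⟩⟩ <;> simp_all
    · rcases A with _ | ⟨x, _ | ⟨y, A⟩⟩ <;> simp_all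
  · rintro (rfl | rfl)
    · exact Or.inl ⟨[], [], a, b, rfl, rfl⟩
    · exact Or.inr ⟨[a], b, rfl, rfl⟩

theorem IsStrictBlowup.length_eq {l l' : List ℤ} (h : IsStrictBlowup l l') :
    l'.length = l.length + 1 := by
  rcases h with ⟨A, B, a, b, rfl, rfl⟩ | ⟨A, a, rfl, rfl⟩ <;> simp +arith

structure PositiveIsolatedOnes (l : List ℤ) : Prop where
  pos : ∀ x ∈ l, 0 < x
  one_mem : 1 ∈ l
  isChain : l.IsChain fun x y => x ≠ 1 ∨ y ≠ 1

theorem PositiveIsolatedOnes.of_isStrictBlowup {l l' : List ℤ} (h : PositiveIsolatedOnes l)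
    (hb : IsStrictBlowup l l') : PositiveIsolatedOnes l' := by
  obtain ⟨hpos, -, hchain⟩ := h
  rcases hb with ⟨A, B, a, b, rfl, rfl⟩ | ⟨A, a, rfl, rfl⟩
  · have ha : 0 < a := hpos a (by simp)
    have hb : 0 < b := hpos b (by simp)
    refine ⟨?_, by simp, ?_⟩
    · intro x hx
      simp only [List.mem_append, List.mem_cons] at hx
      rcases hx with hx | rfl | rfl | rfl | hx <;> first | omega | exact hpos x (by simp [hx])
    · simp only [List.isChain_append, List.isChain_cons_cons] at hchain ⊢
      obtain ⟨hA, ⟨-, hbB⟩, -⟩ := hchain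
      refine ⟨hA, ⟨Or.inl (by omega), Or.inr (by omega), ?_⟩, ?_⟩
      · exact List.isChain_cons.mpr ⟨fun _ _ => Or.inl (by omega), (List.isChain_cons.mp hbB).2⟩
      · simp only [List.head?_cons, Option.mem_some_iff]
        rintro x - y rfl
        exact Or.inr (by omega)
  · have ha : 0 < a := hpos a (by simp)
    refine ⟨?_, by simp, ?_⟩
    · intro x hx
      simp only [List.mem_append, List.mem_cons] at hx
      rcases hx with hx | rfl | rfl | hx <;> first | omega | exact hpos x (by simp [hx])
    · simp only [List.isChain_append, List.isChain_cons_cons] at hchain ⊢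
      refine ⟨hchain.1, ⟨Or.inl (by omega), List.isChain_singleton 1⟩, ?_⟩
      simp only [List.head?_cons, Option.mem_some_iff]
      rintro x - y rfl
      exact Or.inr (by omega)

def IsBlowupNextToOne (l l' : List ℤ) : Prop :=
  ∃ i : ℕ, 1 ≤ i ∧ i ≤ l.length ∧ l.getD (i - 1) 0 = 1 ∧
    ((2 ≤ i ∧ l' = blowupAt l (i - 1)) ∨ l' = blowupAt l i)

theorem isBlowupNextToOne_of_isStrictBlowup {l l' : List ℤ} (h : PositiveIsolatedOnes l)
    (hb : IsStrictBlowup l l') (hone : l'.count 1 = 1) :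
    l.count 1 = 1 ∧ IsBlowupNextToOne l l' := by
  obtain ⟨hpos, hmem, hchain⟩ := h
  rcases hb with ⟨A, B, a, b, rfl, rfl⟩ | ⟨A, a, rfl, rfl⟩
  · have ha : a + 1 ≠ 1 := by have := hpos a (by simp); omega
    have hb : b + 1 ≠ 1 := by have := hpos b (by simp); omega
    have hab : a ≠ 1 ∨ b ≠ 1 := (List.isChain_cons_cons.mp (List.isChain_append.mp hchain).2.1).1
    simp only [List.count_append, List.count_cons_of_ne ha, List.count_cons_self,
      List.count_cons_of_ne hb] at hone
    simp only [List.mem_append, List.mem_cons] at hmem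
    rcases eq_or_ne a 1 with rfl | ha1 <;> rcases eq_or_ne b 1 with rfl | hb1
    · simp at hab
    · refine ⟨by simp [hb1]; omega, A.length + 1, by omega, by simp, by simp, ?_⟩
      exact Or.inr (blowupAt_append_cons_cons A B 1 b).symm
    · refine ⟨by simp [ha1]; omega, A.length + 2, by omega, by simp, by simp, ?_⟩
      exact Or.inl ⟨by omega, (blowupAt_append_cons_cons A B a 1).symm⟩
    · have hA : 1 ∉ A := List.count_eq_zero.mp (by omega)
      have hB : 1 ∉ B := List.count_eq_zero.mp (by omega)
      rcases hmem with h | h | h | h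
      exacts [absurd h hA, absurd h.symm ha1, absurd h.symm hb1, absurd h hB]
  · have ha : a + 1 ≠ 1 := by have := hpos a (by simp); omega
    simp only [List.count_append, List.count_cons_of_ne ha, List.count_singleton_self] at hone
    simp only [List.mem_append, List.mem_singleton] at hmem
    obtain rfl : a = 1 := hmem.resolve_left (List.count_eq_zero.mp (by omega)) |>.symm
    refine ⟨by simp; omega, A.length + 1, by omega, by simp, by simp, ?_⟩
    exact Or.inr (blowupAt_append_singleton A 1).symm

theorem IsNullSeq.eq_or_positiveIsolatedOnes {l : List ℤ} (hl : IsNullSeq l) :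
    l = [0] ∨ l = [1, 1] ∨ 3 ≤ l.length ∧ PositiveIsolatedOnes l := by
  induction hl with
  | refl => exact Or.inl rfl
  | @tail l₀ l _ hb ih =>
    rcases ih with rfl | rfl | ⟨hlen, h⟩
    · exact Or.inr (Or.inl (isStrictBlowup_singleton_iff.mp hb))
    · refine Or.inr (Or.inr ⟨by rw [hb.length_eq]; rfl, ?_⟩)
      rcases isStrictBlowup_pair_iff.mp hb with rfl | rfl <;> exact ⟨by decide, by simp, by simp⟩
    · exact Or.inr (Or.inr ⟨by rw [hb.length_eq]; omega, h.of_isStrictBlowup hb⟩)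

theorem IsNullSeq.reflTransGen_blowupNextToOne {l : List ℤ} (hl : IsNullSeq l)
    (hlen : 3 ≤ l.length) (hone : l.count 1 = 1) :
    Relation.ReflTransGen (fun l l' => IsBlowupNextToOne l l' ∧ l'.count 1 = 1) [2, 1, 2] l := by
  induction hl with
  | refl => simp at hlen
  | @tail l₀ l hl₀ hb ih =>
    rcases IsNullSeq.eq_or_positiveIsolatedOnes hl₀ with rfl | rfl | ⟨hlen₀, h⟩
    · simp [isStrictBlowup_singleton_iff.mp hb] at hlen
    · rcases isStrictBlowup_pair_iff.mp hb with rfl | rfl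
      · exact .refl
      · norm_num at hone
    · obtain ⟨hone₀, hstep⟩ := isBlowupNextToOne_of_isStrictBlowup h hb hone
      exact (ih hlen₀ hone₀).tail ⟨hstep, hone⟩

theorem stmt9 (l : List ℤ) (hl : IsNullSeq l) (hlen : 3 ≤ l.length)
    (hone : l.count 1 = 1) :
    ∃ (r : ℕ) (f : ℕ → List ℤ),
      f 0 = [2, 1, 2] ∧ f r = l ∧
      (∀ j ≤ r, (f j).count 1 = 1) ∧
      (∀ j < r, ∃ i : ℕ, 1 ≤ i ∧ i ≤ (f j).length ∧ (f j).getD (i - 1) 0 = 1 ∧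
        ((2 ≤ i ∧ f (j + 1) = blowupAt (f j) (i - 1)) ∨
          f (j + 1) = blowupAt (f j) i)) := by
  obtain ⟨r, f, hf0, hfr, hstep⟩ := (hl.reflTransGen_blowupNextToOne hlen hone).exists_seq
  refine ⟨r, f, hf0, hfr, ?_, fun j hj => (hstep j hj).1⟩
  rintro (_ | j) hj
  · simp [hf0]
  · exact (hstep j hj).2
end

section
/- Let k ≥ 1 and let d_1,…,d_{k+1} ≥ 0 and c_1,…,c_k ≥ 0 be integers. Define x = [d_1+2, 2,…,2, d_2+3, 2,…,2, …, d_k+3, 2,…,2, d_{k+1}+2], where for each 1 ≤ i ≤ k there are exactly c_i entries equal to 2 in the i-th block of 2's, and define y = [2,…,2, c_1+3, 2,…,2, c_2+3, …, 2,…,2, c_k+3, 2,…,2], where for each 1 ≤ i ≤ k+1 the i-th block of 2's consists of exactly d_i entries. Then 1/x + 1/y = 1. (Equivalently, if x = p/q in lowest terms then y = p/(p−q); this is the explicit form of Riemenschneider point-diagram duality between the continued fraction expansions of p/q and p/(p−q).) -/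
def IsHJDual (L M : List ℤ) : Prop :=
  1 < hjCF L ∧ 1 < hjCF M ∧ 1 / hjCF L + 1 / hjCF M = 1

namespace IsHJDual

variable {L M : List ℤ}

theorem symm (h : IsHJDual L M) : IsHJDual M L :=
  ⟨h.2.1, h.1, by rw [add_comm]; exact h.2.2⟩

theorem modifyHead_succ_cons_two (h : IsHJDual L M) :
    IsHJDual (L.modifyHead (· + 1)) (2 :: M) := by
  obtain ⟨hL, -, hsum⟩ := h
  cases L with
  | nil => norm_num [hjCF] at hL
  | cons a L =>
    set u := hjCF (a :: L)
    have hx : hjCF ((a + 1) :: L) = u + 1 := by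
      simp only [u, hjCF]; push_cast; ring
    have hy : hjCF (2 :: M) = (u + 1) / u := by
      have hinv : 1 / hjCF M = 1 - 1 / u := by linarith
      simp only [hjCF, hinv]
      field_simp
      ring
    have hu : 0 < u := by linarith
    refine ⟨by simp only [List.modifyHead_cons, hx]; linarith, ?_, ?_⟩
    · rw [hy, lt_div_iff₀ hu]; linarith
    · rw [List.modifyHead_cons, hx, hy]
      field_simp
      ring

theorem add_head_replicate_two (n : ℕ) {a : ℤ} (h : IsHJDual (a :: L) M) :
    IsHJDual ((a + n) :: L) (List.replicate n 2 ++ M) := by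
  induction n with
  | zero => simpa using h
  | succ n ih =>
    rw [Nat.cast_succ, ← add_assoc, List.replicate_succ, List.cons_append]
    exact ih.modifyHead_succ_cons_two

theorem replicate_two_add_head (n : ℕ) {b : ℤ} (h : IsHJDual L (b :: M)) :
    IsHJDual (List.replicate n 2 ++ L) ((b + n) :: M) :=
  (h.symm.add_head_replicate_two n).symm

theorem replicate_two_cons_replicate_two (d c : ℕ) (h : IsHJDual L (2 :: M)) :
    IsHJDual (((d : ℤ) + 2) :: (List.replicate c 2 ++ L))
      (List.replicate d 2 ++ ((c : ℤ) + 3) :: M) := by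
  have h' := h.replicate_two_add_head (c + 1)
  rw [List.replicate_succ, List.cons_append] at h'
  rw [add_comm (d : ℤ), show (c : ℤ) + 3 = 2 + ((c + 1 : ℕ) : ℤ) by push_cast; ring]
  exact h'.add_head_replicate_two d

end IsHJDual

theorem isHJDual_singleton (d : ℕ) : IsHJDual [(d : ℤ) + 2] (2 :: List.replicate d 2) := by
  have h22 : IsHJDual [2] [2] := by norm_num [IsHJDual, hjCF]
  rw [← List.replicate_succ, List.replicate_succ']
  simpa only [add_comm (2 : ℤ)] using h22.add_head_replicate_two d

def xList (k : ℕ) (d c : ℕ → ℕ) : List ℤ :=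
  [(d 1 : ℤ) + 2] ++
    ((List.range (k - 1)).flatMap fun i =>
      List.replicate (c (i + 1)) (2 : ℤ) ++ [(d (i + 2) : ℤ) + 3]) ++
    List.replicate (c k) (2 : ℤ) ++ [(d (k + 1) : ℤ) + 2]

def yList (k : ℕ) (d c : ℕ → ℕ) : List ℤ :=
  ((List.range k).flatMap fun i =>
      List.replicate (d (i + 1)) (2 : ℤ) ++ [(c (i + 1) : ℤ) + 3]) ++
    List.replicate (d (k + 1)) (2 : ℤ)

section

variable (d c : ℕ → ℕ)

theorem xList_one :
    xList 1 d c = ((d 1 : ℤ) + 2) :: (List.replicate (c 1) 2 ++ [(d 2 : ℤ) + 2]) := by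
  simp [xList]

theorem yList_one :
    yList 1 d c = List.replicate (d 1) 2 ++ ((c 1 : ℤ) + 3) :: List.replicate (d 2) 2 := by
  simp [yList]

theorem xList_succ_succ (m : ℕ) :
    xList (m + 2) d c = ((d 1 : ℤ) + 2) :: (List.replicate (c 1) 2 ++
      (xList (m + 1) (d ∘ Nat.succ) (c ∘ Nat.succ)).modifyHead (· + 1)) := by
  simp [xList, List.range_succ_eq_map, List.flatMap_map, add_assoc]

theorem yList_succ (m : ℕ) :
    yList (m + 1) d c = List.replicate (d 1) 2 ++
      ((c 1 : ℤ) + 3) :: yList m (d ∘ Nat.succ) (c ∘ Nat.succ) := by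
  simp [yList, List.range_succ_eq_map, List.flatMap_map]

theorem isHJDual_xList_yList (m : ℕ) : IsHJDual (xList (m + 1) d c) (yList (m + 1) d c) := by
  induction m generalizing d c with
  | zero =>
    rw [xList_one, yList_one]
    exact (isHJDual_singleton (d 2)).replicate_two_cons_replicate_two (d 1) (c 1)
  | succ m ih =>
    rw [xList_succ_succ, yList_succ]
    exact (ih _ _).modifyHead_succ_cons_two.replicate_two_cons_replicate_two (d 1) (c 1)

end

/-- Riemenschneider point-diagram duality: `1/x + 1/y = 1` where
`x = [d₁+2, 2^{c₁}, d₂+3, 2^{c₂}, …, d_k+3, 2^{c_k}, d_{k+1}+2]` and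
`y = [2^{d₁}, c₁+3, 2^{d₂}, c₂+3, …, 2^{d_k}, c_k+3, 2^{d_{k+1}}]`. -/
theorem stmt10 (k : ℕ) (hk : 1 ≤ k) (d c : ℕ → ℕ) (x y : ℚ)
    (hx : x = hjCF ([(d 1 : ℤ) + 2] ++
      ((List.range (k - 1)).flatMap fun i =>
        List.replicate (c (i + 1)) (2 : ℤ) ++ [(d (i + 2) : ℤ) + 3]) ++
      List.replicate (c k) (2 : ℤ) ++ [(d (k + 1) : ℤ) + 2]))
    (hy : y = hjCF (((List.range k).flatMap fun i =>
        List.replicate (d (i + 1)) (2 : ℤ) ++ [(c (i + 1) : ℤ) + 3]) ++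
      List.replicate (d (k + 1)) (2 : ℤ))) :
    1 / x + 1 / y = 1 := by
  obtain ⟨m, rfl⟩ : ∃ m, k = m + 1 := ⟨k - 1, by omega⟩
  rw [hx, hy]
  exact (isHJDual_xList_yList d c m).2.2
end

section
/- Let p > q ≥ 1 be coprime integers, and suppose p/q = [a_1,…,a_n] and p/(p−q) = [b_1,…,b_m] with all a_i ≥ 2 and all b_j ≥ 2. Then m = (a_1 + ⋯ + a_n) − 2n + 1, and (b_1 + ⋯ + b_m) − m = (a_1 + ⋯ + a_n) − n. -/
theorem hjCF_cons (a : ℤ) (l : List ℤ) : hjCF (a :: l) = a - (hjCF l)⁻¹ := by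
  rw [hjCF, one_div]

section Bounds

variable {l : List ℤ}

theorem inv_hjCF_mem_Ico (hl : ∀ x ∈ l, 2 ≤ x) : (hjCF l)⁻¹ ∈ Set.Ico 0 1 := by
  induction l with
  | nil => simp [hjCF]
  | cons a l ih =>
    rw [List.forall_mem_cons] at hl
    obtain ⟨hl0, hl1⟩ := ih hl.2
    have ha : (2 : ℚ) ≤ a := by exact_mod_cast hl.1
    have hgt : 1 < hjCF (a :: l) := by rw [hjCF_cons]; linarith
    exact ⟨by positivity, inv_lt_one_of_one_lt₀ hgt⟩

theorem hjCF_ne_one (hl : ∀ x ∈ l, 2 ≤ x) : hjCF l ≠ 1 := fun h1 => by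
  simpa [h1] using (inv_hjCF_mem_Ico hl).2

theorem sub_one_lt_hjCF_cons (a : ℤ) (hl : ∀ x ∈ l, 2 ≤ x) : (a : ℚ) - 1 < hjCF (a :: l) := by
  rw [hjCF_cons]; linarith [(inv_hjCF_mem_Ico hl).2]

theorem hjCF_cons_le (a : ℤ) (hl : ∀ x ∈ l, 2 ≤ x) : hjCF (a :: l) ≤ a := by
  rw [hjCF_cons]; linarith [(inv_hjCF_mem_Ico hl).1]

theorem one_lt_hjCF_cons {a : ℤ} (ha : 2 ≤ a) (hl : ∀ x ∈ l, 2 ≤ x) : 1 < hjCF (a :: l) := by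
  have : (2 : ℚ) ≤ a := by exact_mod_cast ha
  linarith [sub_one_lt_hjCF_cons a hl]

theorem eq_two_of_hjCF_cons_le_two {a : ℤ} (ha : 2 ≤ a) (hl : ∀ x ∈ l, 2 ≤ x)
    (h : hjCF (a :: l) ≤ 2) : a = 2 := by
  have : (a : ℚ) < 3 := by linarith [sub_one_lt_hjCF_cons a hl]
  have : a < 3 := by exact_mod_cast this
  omega

theorem hjCF_eq_two_iff (hl : ∀ x ∈ l, 2 ≤ x) : hjCF l = 2 ↔ l = [2] := by
  refine ⟨fun h => ?_, by rintro rfl; norm_num [hjCF]⟩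
  rcases l with _ | ⟨a, l⟩
  · norm_num [hjCF] at h
  rw [List.forall_mem_cons] at hl
  obtain rfl := eq_two_of_hjCF_cons_le_two hl.1 hl.2 h.le
  rcases l with _ | ⟨b, l⟩
  · rfl
  · rw [hjCF_cons, Int.cast_ofNat, sub_eq_self, inv_eq_zero] at h
    obtain ⟨hb, hl⟩ := List.forall_mem_cons.1 hl.2
    linarith [one_lt_hjCF_cons hb hl]

end Bounds

theorem sub_one_mul_sub_one_eq_one_of_inv_add_inv_eq_one {x y : ℚ} (hx : x ≠ 0) (hy : y ≠ 0)
    (h : x⁻¹ + y⁻¹ = 1) : (x - 1) * (y - 1) = 1 := by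
  field_simp at h; linarith

theorem inv_hjCF_add_inv_hjCF_cons_sub_one {a b : ℤ} {A B : List ℤ} (ha : 2 ≤ a) (hb : 2 ≤ b)
    (hA : ∀ x ∈ A, 2 ≤ x) (hB : ∀ x ∈ B, 2 ≤ x)
    (h : (hjCF (a :: A))⁻¹ + (hjCF (b :: B))⁻¹ = 1) (hlt : hjCF (a :: A) < 2) :
    a = 2 ∧ 3 ≤ b ∧ (hjCF A)⁻¹ + (hjCF ((b - 1) :: B))⁻¹ = 1 := by
  set x := hjCF (a :: A) with hx
  set y := hjCF (b :: B) with hy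
  have hx1 : 1 < x := one_lt_hjCF_cons ha hA
  have hy1 : 1 < y := one_lt_hjCF_cons hb hB
  have hxy := sub_one_mul_sub_one_eq_one_of_inv_add_inv_eq_one (by positivity) (by positivity) h
  have ha2 : a = 2 := eq_two_of_hjCF_cons_le_two ha hA hlt.le
  have hy2 : 2 < y := by nlinarith
  have hb3 : 3 ≤ b := by
    have : (2 : ℚ) < b := hy2.trans_le (hjCF_cons_le b hB)
    have : 2 < b := by exact_mod_cast this
    omega
  refine ⟨ha2, hb3, ?_⟩
  have hA' : (hjCF A)⁻¹ = 2 - x := by rw [hx, hjCF_cons, ha2]; push_cast; ring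
  have hB' : hjCF ((b - 1) :: B) = y - 1 := by rw [hy, hjCF_cons, hjCF_cons]; push_cast; ring
  rw [hA', hB', inv_eq_of_mul_eq_one_right (by linarith : (y - 1) * (x - 1) = 1)]
  ring

theorem sum_sub_length_eq_of_inv_hjCF_add_inv_hjCF_eq_one {A B : List ℤ}
    (hA : ∀ x ∈ A, 2 ≤ x) (hB : ∀ x ∈ B, 2 ≤ x) (h : (hjCF A)⁻¹ + (hjCF B)⁻¹ = 1) :
    A.sum - A.length = B.sum - B.length ∧ (A.length + B.length : ℤ) = A.sum - A.length + 1 := by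
  induction hN : A.length + B.length using Nat.strong_induction_on generalizing A B with
  | _ N ih =>
    wlog hxy : hjCF A ≤ hjCF B generalizing A B
    · obtain ⟨hw, hl⟩ := this hB hA (by rwa [add_comm]) (by omega) (le_of_not_ge hxy)
      exact ⟨hw.symm, by linarith⟩
    rcases A with _ | ⟨a, A⟩
    · exact absurd (by simpa [hjCF] using h) (hjCF_ne_one hB)
    rcases B with _ | ⟨b, B⟩
    · exact absurd (by simpa [hjCF] using h) (hjCF_ne_one hA)
    rw [List.forall_mem_cons] at hA hB
    have hx1 : 1 < hjCF (a :: A) := one_lt_hjCF_cons hA.1 hA.2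
    have hy1 : 1 < hjCF (b :: B) := one_lt_hjCF_cons hB.1 hB.2
    have hxy1 := sub_one_mul_sub_one_eq_one_of_inv_add_inv_eq_one (by positivity) (by positivity) h
    rcases (show hjCF (a :: A) ≤ 2 by nlinarith).lt_or_eq with hlt | heq
    · obtain ⟨rfl, hb3, hdual⟩ := inv_hjCF_add_inv_hjCF_cons_sub_one hA.1 hB.1 hA.2 hB.2 h hlt
      have hB' : ∀ x ∈ (b - 1) :: B, 2 ≤ x :=
        List.forall_mem_cons.2 ⟨by omega, hB.2⟩
      obtain ⟨hw, hl⟩ := ih _ (by simp at hN ⊢; omega) hA.2 hB' hdual rfl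
      simp only [List.sum_cons, List.length_cons] at hw hl ⊢
      push_cast at hw hl ⊢
      constructor <;> linarith
    · have hy2 : hjCF (b :: B) = 2 := by rw [heq] at hxy1; linarith
      rw [hjCF_eq_two_iff (List.forall_mem_cons.2 hA)] at heq
      rw [hjCF_eq_two_iff (List.forall_mem_cons.2 hB)] at hy2
      rw [heq, hy2]
      norm_num

theorem stmt11_general (p q : ℕ) (hqp : q < p)
    (n m : ℕ)
    (a b : ℕ → ℤ) (ha : ∀ i < n, 2 ≤ a i) (hb : ∀ i < m, 2 ≤ b i)
    (hav : (p : ℚ) / q = hjCF ((List.range n).map fun i => a i))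
    (hbv : (p : ℚ) / ((p : ℚ) - q) = hjCF ((List.range m).map fun i => b i)) :
    (m : ℤ) = ((List.range n).map fun i => a i).sum - 2 * n + 1 ∧
      ((List.range m).map fun i => b i).sum - m =
        ((List.range n).map fun i => a i).sum - n := by
  have hp : (p : ℚ) ≠ 0 := Nat.cast_ne_zero.2 (by omega)
  have hdual : (hjCF ((List.range n).map fun i => a i))⁻¹ +
      (hjCF ((List.range m).map fun i => b i))⁻¹ = 1 := by
    rw [← hav, ← hbv, inv_div, inv_div, ← add_div, add_sub_cancel, div_self hp]
  obtain ⟨hw, hl⟩ := sum_sub_length_eq_of_inv_hjCF_add_inv_hjCF_eq_one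
    (by simpa using ha) (by simpa using hb) hdual
  simp only [List.length_map, List.length_range] at hw hl
  constructor <;> linarith

theorem stmt11 (p q : ℕ) (hq : 1 ≤ q) (hqp : q < p) (hpq : Nat.Coprime p q)
    (n m : ℕ) (hn : 1 ≤ n) (hm : 1 ≤ m)
    (a b : ℕ → ℤ) (ha : ∀ i < n, 2 ≤ a i) (hb : ∀ i < m, 2 ≤ b i)
    (hav : (p : ℚ) / q = hjCF ((List.range n).map fun i => a i))
    (hbv : (p : ℚ) / ((p : ℚ) - q) = hjCF ((List.range m).map fun i => b i)) :
    (m : ℤ) = ((List.range n).map fun i => a i).sum - 2 * n + 1 ∧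
      ((List.range m).map fun i => b i).sum - m =
        ((List.range n).map fun i => a i).sum - n :=
  stmt11_general p q hqp n m a b ha hb hav hbv
end

section
/- Let a/b and c/d be rational numbers written in lowest terms with b, d > 0 and ad − bc = 1 (so c/d < a/b and they are Farey neighbors). Then a rational number z satisfies c/d ≤ z < a/b and is a Farey neighbor of a/b if and only if z = (c + ka)/(d + kb) for some integer k ≥ 0; moreover each fraction (c + ka)/(d + kb) with k ≥ 0 is already in lowest terms. -/
/-!
Write a Farey neighbour `z = p/q` of `a/b` lying below it as `a q - b p = 1`. Subtracting
`a d - b c = 1` gives `a (q - d) = b (p - c)`, and since `a, b` are coprime this forces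
`(p, q) = (c + k a, d + k b)` for an integer `k`. Across the edge `c/d — a/b` the fractions
`(c + k a)/(d + k b)` are ordered by `k`, so `c/d ≤ z` is exactly `0 ≤ k`. Each such pair still has
determinant `1` against `(a, b)`, which makes it coprime.
-/

theorem fareyNeighbor_div_div_iff {p q r s : ℤ} (hq : 0 < q) (hs : 0 < s)
    (hpq : Int.gcd p q = 1) (hrs : Int.gcd r s = 1) :
    FareyNeighbor (p / q) (r / s) ↔ (p * s - r * q).natAbs = 1 := by
  rw [FareyNeighbor, Rat.num_div_eq_of_coprime hq hpq, Rat.den_div_eq_of_coprime hq hpq,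
    Rat.num_div_eq_of_coprime hs hrs, Rat.den_div_eq_of_coprime hs hrs]

theorem det_eq_one_of_fareyNeighbor_of_lt {x : ℚ} {r s : ℤ} (hs : 0 < s) (hrs : Int.gcd r s = 1)
    (hx : FareyNeighbor x (r / s)) (hlt : x < r / s) : r * x.den - s * x.num = 1 := by
  have hden : (0 : ℤ) < x.den := Int.natCast_pos.mpr x.pos
  rw [← x.num_div_den, ← Int.cast_natCast] at hx hlt
  rw [fareyNeighbor_div_div_iff hden hs x.reduced hrs] at hx
  rw [div_lt_div_iff₀ (by exact_mod_cast hden) (by exact_mod_cast hs)] at hlt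
  have : x.num * s < r * x.den := by exact_mod_cast hlt
  rw [mul_comm s]; omega

theorem exists_eq_add_mul_of_det_eq_one {a b c d p q : ℤ} (hb : b ≠ 0) (hab : IsCoprime a b)
    (h : a * d - b * c = 1) (h' : a * q - b * p = 1) : ∃ k : ℤ, p = c + k * a ∧ q = d + k * b := by
  have hkey : a * (q - d) = b * (p - c) := by linear_combination h' - h
  obtain ⟨k, hk⟩ : b ∣ q - d := hab.symm.dvd_of_dvd_mul_left ⟨p - c, hkey⟩
  refine ⟨k, ?_, by linear_combination hk⟩
  have : b * (p - c) = b * (k * a) := by rw [← hkey, hk]; ring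
  linear_combination mul_left_cancel₀ hb this

theorem gcd_add_mul_eq_one_of_det_eq_one {a b c d : ℤ} (h : a * d - b * c = 1) (k : ℤ) :
    Int.gcd (c + k * a) (d + k * b) = 1 :=
  Int.isCoprime_iff_gcd_eq_one.mp ⟨-b, a, by linear_combination h⟩

theorem div_le_add_mul_div_add_mul_iff {a b c d k : ℤ} (hd : 0 < d) (hk : 0 < d + k * b)
    (h : a * d - b * c = 1) :
    (c / d : ℚ) ≤ ((c + k * a : ℤ) : ℚ) / ((d + k * b : ℤ) : ℚ) ↔ 0 ≤ k := by
  rw [div_le_div_iff₀ (by exact_mod_cast hd) (by exact_mod_cast hk)]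
  have hdiff : (c + k * a) * d - c * (d + k * b) = k := by linear_combination k * h
  constructor <;> intro hle
  · have : c * (d + k * b) ≤ (c + k * a) * d := by exact_mod_cast hle
    linarith
  · exact_mod_cast (show c * (d + k * b) ≤ (c + k * a) * d by linarith)

theorem add_mul_div_add_mul_lt_div {a b c d k : ℤ} (hb : 0 < b) (hk : 0 < d + k * b)
    (h : a * d - b * c = 1) : ((c + k * a : ℤ) : ℚ) / ((d + k * b : ℤ) : ℚ) < a / b := by
  rw [div_lt_div_iff₀ (by exact_mod_cast hk) (by exact_mod_cast hb)]
  exact_mod_cast (show (c + k * a) * b < a * (d + k * b) by linarith)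

theorem stmt12_general (a b c d : ℤ) (hb : 0 < b) (hd : 0 < d)
    (hab : Int.gcd a b = 1)
    (h : a * d - b * c = 1) :
    (∀ z : ℚ,
      ((c : ℚ) / (d : ℚ) ≤ z ∧ z < (a : ℚ) / (b : ℚ) ∧ FareyNeighbor z ((a : ℚ) / (b : ℚ))) ↔
        ∃ k : ℕ, z = ((c : ℚ) + (k : ℚ) * (a : ℚ)) / ((d : ℚ) + (k : ℚ) * (b : ℚ))) ∧
    ∀ k : ℕ, Int.gcd (c + (k : ℤ) * a) (d + (k : ℤ) * b) = 1 := by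
  have hcop := gcd_add_mul_eq_one_of_det_eq_one h
  refine ⟨fun z => ⟨?_, ?_⟩, fun k => hcop k⟩
  · rintro ⟨hcz, hza, hzn⟩
    obtain ⟨k, hp, hq⟩ := exists_eq_add_mul_of_det_eq_one hb.ne'
      (Int.isCoprime_iff_gcd_eq_one.mpr hab) h (det_eq_one_of_fareyNeighbor_of_lt hb hab hzn hza)
    have hz : z = ((c + k * a : ℤ) : ℚ) / ((d + k * b : ℤ) : ℚ) := by
      rw [← hp, ← hq, Int.cast_natCast, Rat.num_div_den]
    have hpos : 0 < d + k * b := hq ▸ Int.natCast_pos.mpr z.pos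
    rw [hz, div_le_add_mul_div_add_mul_iff hd hpos h] at hcz
    lift k to ℕ using hcz
    exact ⟨k, by rw [hz]; push_cast; rfl⟩
  · rintro ⟨k, rfl⟩
    have hpos : 0 < d + (k : ℤ) * b := by positivity
    have hz : ((c : ℚ) + k * a) / ((d : ℚ) + k * b)
        = ((c + (k : ℤ) * a : ℤ) : ℚ) / ((d + (k : ℤ) * b : ℤ) : ℚ) := by push_cast; rfl
    rw [hz, fareyNeighbor_div_div_iff hpos hb (hcop k) hab,
      show (c + k * a) * b - a * (d + k * b) = -1 by linear_combination -h]
    exact ⟨(div_le_add_mul_div_add_mul_iff hd hpos h).mpr (Int.natCast_nonneg k),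
      add_mul_div_add_mul_lt_div hb hpos h, rfl⟩

theorem stmt12 (a b c d : ℤ) (hb : 0 < b) (hd : 0 < d)
    (hab : Int.gcd a b = 1) (hcd : Int.gcd c d = 1)
    (h : a * d - b * c = 1) :
    (∀ z : ℚ,
      ((c : ℚ) / (d : ℚ) ≤ z ∧ z < (a : ℚ) / (b : ℚ) ∧ FareyNeighbor z ((a : ℚ) / (b : ℚ))) ↔
        ∃ k : ℕ, z = ((c : ℚ) + (k : ℚ) * (a : ℚ)) / ((d : ℚ) + (k : ℚ) * (b : ℚ))) ∧
    ∀ k : ℕ, Int.gcd (c + (k : ℤ) * a) (d + (k : ℤ) * b) = 1 :=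
  stmt12_general a b c d hb hd hab h
end

section
/- Let a/b and c/d be rational numbers written in lowest terms with b, d > 0 and ad − bc = −1 (so a/b < c/d and they are Farey neighbors). Set v = (a+c)/(b+d) and w = (a+2c)/(b+2d). If z is a rational number that is a Farey neighbor of v and satisfies z < a/b or z > w, then z = c/d. -/
theorem stmt13 (a b c d : ℤ) (hb : 0 < b) (hd : 0 < d)
    (hab : Int.gcd a b = 1) (hcd : Int.gcd c d = 1)
    (h : a * d - b * c = -1)
    (v w : ℚ)
    (hv : v = ((a : ℚ) + (c : ℚ)) / ((b : ℚ) + (d : ℚ)))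
    (hw : w = ((a : ℚ) + 2 * (c : ℚ)) / ((b : ℚ) + 2 * (d : ℚ)))
    (z : ℚ) (hz : FareyNeighbor z v)
    (hzz : z < (a : ℚ) / (b : ℚ) ∨ w < z) :
    z = (c : ℚ) / (d : ℚ) := by
  have hbd : (0:ℤ) < b + d := by linarith
  have hb2d : (0:ℤ) < b + 2*d := by linarith
  -- coprimality of mediant
  have hcopv : IsCoprime (a + c) (b + d) := ⟨-d, c, by linarith [h]⟩
  have hcopv' : Nat.Coprime (a + c).natAbs (b + d).natAbs := by
    rwa [Int.isCoprime_iff_gcd_eq_one] at hcopv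
  -- rewrite v as a fraction of integers
  have hv' : v = ((a + c : ℤ) : ℚ) / ((b + d : ℤ) : ℚ) := by
    rw [hv]; push_cast; ring_nf
  have hvnum : v.num = a + c := by
    rw [hv']; exact Rat.num_div_eq_of_coprime hbd hcopv'
  have hvden : (v.den : ℤ) = b + d := by
    rw [hv']; exact Rat.den_div_eq_of_coprime hbd hcopv'
  set p : ℤ := z.num with hp
  set q : ℤ := (z.den : ℤ) with hq
  have hq0 : 0 < q := by rw [hq]; exact_mod_cast z.pos
  have hzeq : z = (p : ℚ) / (q : ℚ) := by
    rw [hp, hq]; exact_mod_cast (Rat.num_div_den z).symm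
  have hz' : p * (b + d) - (a + c) * q = 1 ∨ p * (b + d) - (a + c) * q = -1 := by
    unfold FareyNeighbor at hz
    rw [hvnum, hvden] at hz
    rcases Int.natAbs_eq_iff.mp hz with h1 | h1
    · left; exact_mod_cast h1
    · right; exact_mod_cast h1
  -- helper: comparisons
  have hzab : z < (a:ℚ)/(b:ℚ) ↔ p * b < a * q := by
    rw [hzeq, div_lt_div_iff₀ (by exact_mod_cast hq0) (by exact_mod_cast hb)]
    constructor
    · intro hlt; exact_mod_cast hlt
    · intro hlt; exact_mod_cast hlt
  have hwz : w < z ↔ (a + 2*c) * q < p * (b + 2*d) := by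
    rw [hzeq, hw]
    have : ((a : ℚ) + 2 * (c : ℚ)) / ((b : ℚ) + 2 * (d : ℚ))
        = ((a + 2*c : ℤ) : ℚ) / ((b + 2*d : ℤ) : ℚ) := by push_cast; ring_nf
    rw [this, div_lt_div_iff₀ (by exact_mod_cast hb2d) (by exact_mod_cast hq0)]
    constructor
    · intro hlt; exact_mod_cast hlt
    · intro hlt; exact_mod_cast hlt
  rcases hz' with h1 | h1
  · -- z = (c + t(a+c))/(d + t(b+d)), t ≥ 0
    have hdvd : (b + d) ∣ (q - d) := by
      have hmul : (b + d) ∣ (a + c) * (q - d) :=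
        ⟨p - c, by linarith [h1, h]⟩
      exact (IsCoprime.symm hcopv).dvd_of_dvd_mul_left hmul
    obtain ⟨t, ht⟩ := hdvd
    have hq' : q = d + (b + d) * t := by linarith [ht]
    have hp' : p = c + (a + c) * t := by
      have hcancel : (p - c) * (b + d) = ((a + c) * t) * (b + d) := by
        have : (a + c) * (q - d) = (a+c) * ((b+d)*t) := by rw [ht]
        nlinarith [h1, h, this]
      have := mul_right_cancel₀ (by linarith : (b:ℤ) + d ≠ 0) hcancel
      linarith [this]
    have ht0 : 0 ≤ t := by
      by_contra hneg
      push_neg at hneg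
      have : t ≤ -1 := by linarith
      have : (b + d) * t ≤ (b + d) * (-1) := by
        exact mul_le_mul_of_nonneg_left this (by linarith)
      linarith [hq0, hq']
    rcases eq_or_lt_of_le ht0 with ht1 | ht1
    · -- t = 0 : z = c/d
      have hpc : p = c := by rw [hp', ← ht1]; ring
      have hqd : q = d := by rw [hq', ← ht1]; ring
      rw [hzeq, hpc, hqd]
    · -- t ≥ 1 : contradiction
      have ht1' : 1 ≤ t := ht1
      exfalso
      rcases hzz with hlt | hlt
      · rw [hzab] at hlt
        have : p * b - a * q = 1 + t := by
          rw [hp', hq']; linear_combination (-(1 + t)) * h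
        linarith
      · rw [hwz] at hlt
        have : (a + 2*c) * q - p * (b + 2*d) = t - 1 := by
          rw [hp', hq']; linear_combination (1 - t) * h
        linarith
  · -- z = (a + t(a+c))/(b + t(b+d)), t ≥ 0 : always contradiction
    exfalso
    have hdvd : (b + d) ∣ (q - b) := by
      have hmul : (b + d) ∣ (a + c) * (q - b) :=
        ⟨p - a, by linarith [h1]⟩
      exact (IsCoprime.symm hcopv).dvd_of_dvd_mul_left hmul
    obtain ⟨t, ht⟩ := hdvd
    have hq' : q = b + (b + d) * t := by linarith [ht]
    have hp' : p = a + (a + c) * t := by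
      have hcancel : (p - a) * (b + d) = ((a + c) * t) * (b + d) := by
        have : (a + c) * (q - b) = (a+c) * ((b+d)*t) := by rw [ht]
        nlinarith [h1, this]
      have := mul_right_cancel₀ (by linarith : (b:ℤ) + d ≠ 0) hcancel
      linarith [this]
    have ht0 : 0 ≤ t := by
      by_contra hneg
      push_neg at hneg
      have : t ≤ -1 := by linarith
      have : (b + d) * t ≤ (b + d) * (-1) := by
        exact mul_le_mul_of_nonneg_left this (by linarith)
      linarith [hq0, hq']
    rcases hzz with hlt | hlt
    · rw [hzab] at hlt
      have : p * b - a * q = t := by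
        rw [hp', hq']; linear_combination (-t) * h
      linarith
    · rw [hwz] at hlt
      have : (a + 2*c) * q - p * (b + 2*d) = 2 + t := by
        rw [hp', hq']; linear_combination -(2 + t) * h
      linarith
end

section
/- The null sequences of length 5, each of whose entries is 1 or 2 with the exception of either at most two entries equal to 3 or a single entry equal to 4, are exactly the following thirteen sequences: (1,2,2,2,1), (3,1,2,3,1), (1,3,2,1,3), (2,3,1,2,3), (3,2,1,3,2), (2,2,2,1,4), (4,1,2,2,2), (2,2,1,4,1), (1,4,1,2,2), (2,1,4,1,2), (1,3,1,3,1), (2,1,3,2,1), and (1,2,3,1,2). -/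
/-!
Every strict blowup lengthens a sequence by one, and a sequence has only finitely many strict
blowups, which `blowups` lists. Hence the null sequences of length `n + 1` are exactly the
members of the explicit list `nullSeqs n` obtained by blowing up `(0)` in all possible ways
`n` times, and the theorem becomes a finite check over `nullSeqs 4`.
-/

namespace IsStrictBlowup

lemma length_eq_s15 {l l' : List ℤ} (h : IsStrictBlowup l l') : l'.length = l.length + 1 := by
  rcases h with ⟨A, B, a, b, rfl, rfl⟩ | ⟨A, a, rfl, rfl⟩ <;> simp only [List.length_append, List.length_cons] <;> omega

lemma cons {l l' : List ℤ} (h : IsStrictBlowup l l') (a : ℤ) :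
    IsStrictBlowup (a :: l) (a :: l') := by
  rcases h with ⟨A, B, x, y, rfl, rfl⟩ | ⟨A, x, rfl, rfl⟩
  · exact Or.inl ⟨a :: A, B, x, y, rfl, rfl⟩
  · exact Or.inr ⟨a :: A, x, rfl, rfl⟩

end IsStrictBlowup

lemma not_isStrictBlowup_nil (l' : List ℤ) : ¬ IsStrictBlowup [] l' := by
  rintro (⟨A, B, a, b, h, -⟩ | ⟨A, a, h, -⟩) <;> simp at h

lemma isStrictBlowup_cons_iff {a : ℤ} {l l' : List ℤ} :
    IsStrictBlowup (a :: l) l' ↔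
      (l = [] ∧ l' = [a + 1, 1]) ∨
      (∃ b rest, l = b :: rest ∧ l' = (a + 1) :: 1 :: (b + 1) :: rest) ∨
      ∃ m, IsStrictBlowup l m ∧ l' = a :: m := by
  constructor
  · rintro (⟨A, B, x, y, h, rfl⟩ | ⟨A, x, h, rfl⟩) <;> rw [List.cons_eq_append_iff] at h
    · rcases h with ⟨rfl, h⟩ | ⟨A', rfl, rfl⟩
      · obtain ⟨rfl, rfl⟩ := List.cons_eq_cons.1 h
        exact Or.inr (Or.inl ⟨y, B, rfl, rfl⟩)
      · exact Or.inr (Or.inr ⟨_, Or.inl ⟨A', B, x, y, rfl, rfl⟩, rfl⟩)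
    · rcases h with ⟨rfl, h⟩ | ⟨A', rfl, rfl⟩
      · obtain ⟨rfl, rfl⟩ := List.cons_eq_cons.1 h
        exact Or.inl ⟨rfl, rfl⟩
      · exact Or.inr (Or.inr ⟨_, Or.inr ⟨A', x, rfl, rfl⟩, rfl⟩)
  · rintro (⟨rfl, rfl⟩ | ⟨b, rest, rfl, rfl⟩ | ⟨m, h, rfl⟩)
    · exact Or.inr ⟨[], a, rfl, rfl⟩
    · exact Or.inl ⟨[], rest, a, b, rfl, rfl⟩
    · exact h.cons a

def blowups : List ℤ → List (List ℤ)
  | [] => []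
  | [a] => [[a + 1, 1]]
  | a :: b :: rest =>
      ((a + 1) :: 1 :: (b + 1) :: rest) :: (blowups (b :: rest)).map (a :: ·)

lemma mem_blowups {l l' : List ℤ} : l' ∈ blowups l ↔ IsStrictBlowup l l' := by
  induction l using blowups.induct generalizing l' with
  | case1 => simp [blowups, not_isStrictBlowup_nil]
  | case2 a => simp [blowups, isStrictBlowup_cons_iff, not_isStrictBlowup_nil]
  | case3 a b rest ih =>
    rw [isStrictBlowup_cons_iff]
    simp [blowups, ih, eq_comm]

lemma IsNullSeq.length_pos {l : List ℤ} (h : IsNullSeq l) : 0 < l.length := by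
  induction h with
  | refl => simp
  | tail _ hstep _ => simp [hstep.length_eq_s15]

def nullSeqs : ℕ → List (List ℤ)
  | 0 => [[0]]
  | n + 1 => (nullSeqs n).flatMap blowups

lemma mem_nullSeqs {n : ℕ} {l : List ℤ} : l ∈ nullSeqs n ↔ IsNullSeq l ∧ l.length = n + 1 := by
  induction n generalizing l with
  | zero =>
    refine ⟨fun h => ?_, fun ⟨hnull, hlen⟩ => ?_⟩
    · obtain rfl : l = [0] := by simpa [nullSeqs] using h
      exact ⟨.refl, rfl⟩
    · rcases Relation.ReflTransGen.cases_tail hnull with rfl | ⟨m, hm, hstep⟩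
      · simp [nullSeqs]
      · have := IsNullSeq.length_pos hm
        have := hstep.length_eq_s15
        omega
  | succ n ih =>
    simp only [nullSeqs, List.mem_flatMap, mem_blowups, ih]
    constructor
    · rintro ⟨m, ⟨hm, hlen⟩, hstep⟩
      exact ⟨hm.tail hstep, by rw [hstep.length_eq_s15, hlen]⟩
    · rintro ⟨hnull, hlen⟩
      rcases Relation.ReflTransGen.cases_tail hnull with rfl | ⟨m, hm, hstep⟩
      · simp at hlen
      · exact ⟨m, ⟨hm, by have := hstep.length_eq_s15; omega⟩, hstep⟩

lemma mem_and_iff_mem_of_forall {α : Type*} {S T : List α} {p : α → Prop}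
    (hST : ∀ x ∈ S, p x → x ∈ T) (hTS : ∀ x ∈ T, x ∈ S ∧ p x) (x : α) :
    x ∈ S ∧ p x ↔ x ∈ T :=
  ⟨fun h => hST x h.1 h.2, hTS x⟩

theorem stmt15 (l : List ℤ) (hlen : l.length = 5) :
    (IsNullSeq l ∧
      (((∀ x ∈ l, x = 1 ∨ x = 2 ∨ x = 3) ∧ l.count 3 ≤ 2) ∨
        ((∀ x ∈ l, x = 1 ∨ x = 2 ∨ x = 4) ∧ l.count 4 ≤ 1))) ↔
      l ∈ ([[1, 2, 2, 2, 1], [3, 1, 2, 3, 1], [1, 3, 2, 1, 3], [2, 3, 1, 2, 3],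
        [3, 2, 1, 3, 2], [2, 2, 2, 1, 4], [4, 1, 2, 2, 2], [2, 2, 1, 4, 1],
        [1, 4, 1, 2, 2], [2, 1, 4, 1, 2], [1, 3, 1, 3, 1], [2, 1, 3, 2, 1],
        [1, 2, 3, 1, 2]] : List (List ℤ)) := by
  have hnull : IsNullSeq l ↔ l ∈ nullSeqs 4 := by simp [mem_nullSeqs, hlen]
  rw [hnull]
  apply mem_and_iff_mem_of_forall <;> decide
end

section
/- For every null sequence (n_1,…,n_k), the k×k symmetric tridiagonal integer matrix M with diagonal entries M_{ii} = n_i, off-diagonal entries M_{i,i+1} = M_{i+1,i} = 1 for 1 ≤ i ≤ k−1, and all other entries 0, has determinant equal to 0. (This is the linking matrix of the chain of unknots with framings n_1,…,n_k, reflecting the fact that surgery on this chain yields S¹ × S².) -/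
def Mk (n : ℤ) : Matrix (Fin 2) (Fin 2) ℤ := !![n, -1; 1, 0]

def Pm (l : List ℤ) : Matrix (Fin 2) (Fin 2) ℤ := (l.map Mk).prod

def tri (l : List ℤ) : Matrix (Fin l.length) (Fin l.length) ℤ :=
  Matrix.of fun i j : Fin l.length =>
      if i = j then l.get i
      else if (i : ℕ) + 1 = (j : ℕ) ∨ (j : ℕ) + 1 = (i : ℕ) then (1 : ℤ)
      else 0

lemma tri_apply (l : List ℤ) (i j : Fin l.length) :
    tri l i j = if i = j then l.get i
      else if (i : ℕ) + 1 = (j : ℕ) ∨ (j : ℕ) + 1 = (i : ℕ) then (1 : ℤ)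
      else 0 := rfl

lemma tri_sub (n : ℤ) (t : List ℤ) :
    (tri (n :: t)).submatrix Fin.succ Fin.succ = tri t := by
  ext i j
  simp [tri, Fin.ext_iff, Matrix.submatrix_apply]

lemma Pm_cons (n : ℤ) (t : List ℤ) : Pm (n :: t) = Mk n * Pm t := by
  simp [Pm]

lemma key_s17 : ∀ l : List ℤ, (tri l).det = Pm l 0 0
  | [] => by simp [tri, Pm]
  | [n] => by
      simp [tri, Pm, Mk, Matrix.det_fin_one]
  | n :: m :: t => by
      have ih1 := key_s17 (m :: t)
      have ih2 := key_s17 t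
      simp only [List.length_cons] at ih1
      rw [Matrix.det_succ_row_zero]
      simp only [List.length_cons]
      rw [Fin.sum_univ_succ, Fin.sum_univ_succ]
      -- tail sum is zero
      have hz : ∀ j : Fin t.length,
          tri (n :: m :: t) (0 : Fin (t.length + 1 + 1)) j.succ.succ = 0 := by
        intro j
        rw [tri_apply]
        simp [Fin.ext_iff]
      -- j = 1 minor
      have h1 : ((tri (n :: m :: t)).submatrix Fin.succ
          (Fin.succAbove (Fin.succ (0 : Fin (t.length + 1))))).det = Pm t 0 0 := by
        rw [Matrix.det_succ_column_zero, Fin.sum_univ_succ]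
        have hz2 : ∀ i : Fin t.length,
            (tri (n :: m :: t)).submatrix Fin.succ
              (Fin.succAbove (Fin.succ (0 : Fin (t.length + 1))))
              i.succ (0 : Fin (t.length + 1)) = 0 := by
          intro i
          rw [Matrix.submatrix_apply, tri_apply]
          simp [Fin.ext_iff, Fin.succAbove, Fin.lt_def]
        have hmm : ((tri (n :: m :: t)).submatrix Fin.succ
            (Fin.succAbove (Fin.succ (0 : Fin (t.length + 1))))).submatrix
            (Fin.succAbove (0 : Fin (t.length + 1))) Fin.succ
            = tri t := by
          rw [Matrix.submatrix_submatrix]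
          have hr : Fin.succ ∘ (Fin.succAbove (0 : Fin (t.length + 1)))
              = Fin.succ ∘ Fin.succ := by
            funext i; simp [Fin.succAbove_zero]
          have hc : (Fin.succAbove (Fin.succ (0 : Fin (t.length + 1)))) ∘ Fin.succ
              = Fin.succ ∘ Fin.succ := by
            funext i
            simp [Fin.succAbove, Fin.lt_def, Fin.ext_iff]
          rw [hr, hc, ← Matrix.submatrix_submatrix, tri_sub, tri_sub]
        have he : (tri (n :: m :: t)).submatrix Fin.succ
            (Fin.succAbove (Fin.succ (0 : Fin (t.length + 1))))
            (0 : Fin (t.length + 1)) (0 : Fin (t.length + 1)) = 1 := by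
          rw [Matrix.submatrix_apply, tri_apply]
          simp [Fin.succAbove, Fin.ext_iff, Fin.lt_def]
        rw [hmm]
        simp only [hz2, he, ih2]
        simp
      have hd0 : tri (n :: m :: t) (0 : Fin (t.length + 1 + 1))
          (0 : Fin (t.length + 1 + 1)) = n := by
        rw [tri_apply]; simp
      have hd1 : tri (n :: m :: t) (0 : Fin (t.length + 1 + 1))
          (Fin.succ (0 : Fin (t.length + 1))) = 1 := by
        rw [tri_apply]; simp [Fin.ext_iff]
      simp only [List.length_cons] at h1 hz hd0 hd1
      rw [Fin.succAbove_zero, tri_sub, ih1, h1, hd0, hd1]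
      simp only [hz]
      have e1 : Pm (m :: t) 0 0 = m * Pm t 0 0 - Pm t 1 0 := by
        rw [Pm_cons, Matrix.mul_apply, Fin.sum_univ_two]
        simp [Mk]; ring
      have e2 : Pm (m :: t) 1 0 = Pm t 0 0 := by
        rw [Pm_cons, Matrix.mul_apply, Fin.sum_univ_two]
        simp [Mk]
      have e3 : Pm (n :: m :: t) 0 0 = n * Pm (m :: t) 0 0 - Pm (m :: t) 1 0 := by
        rw [Pm_cons, Matrix.mul_apply, Fin.sum_univ_two]
        simp [Mk]; ring
      rw [e3, e1, e2]
      simp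
      ring

lemma Pm_append (A B : List ℤ) : Pm (A ++ B) = Pm A * Pm B := by
  simp [Pm]

lemma Mk_blow (a b : ℤ) : Mk (a + 1) * Mk 1 * Mk (b + 1) = Mk a * Mk b := by
  ext i j
  fin_cases i <;> fin_cases j <;>
    simp [Mk, Matrix.mul_apply, Fin.sum_univ_two] <;> ring

lemma Mk_end (a : ℤ) : Mk (a + 1) * Mk 1 = !![a, -(a+1); 1, -1] := by
  ext i j
  fin_cases i <;> fin_cases j <;>
    simp [Mk, Matrix.mul_apply, Fin.sum_univ_two] <;> ring

lemma blow (l l' : List ℤ) (h : IsStrictBlowup l l') : Pm l' 0 0 = Pm l 0 0 := by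
  rcases h with ⟨A, B, a, b, rfl, rfl⟩ | ⟨A, a, rfl, rfl⟩
  · have : Pm ((a + 1) :: 1 :: (b + 1) :: B) = Pm (a :: b :: B) := by
      simp only [Pm_cons, ← mul_assoc, Mk_blow]
    rw [Pm_append, Pm_append, this]
  · rw [Pm_append, Pm_append]
    have h2 : Pm [a + 1, 1] = !![a, -(a+1); 1, -1] := by
      simp only [Pm_cons]
      rw [show Pm ([] : List ℤ) = 1 from rfl, mul_one, Mk_end]
    rw [h2, Matrix.mul_apply, Fin.sum_univ_two, Matrix.mul_apply, Fin.sum_univ_two]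
    have ha : Pm [a] = Mk a := by rw [Pm_cons, show Pm ([] : List ℤ) = 1 from rfl, mul_one]
    rw [ha]
    simp [Mk]

theorem stmt17 (l : List ℤ) (hl : IsNullSeq l) :
    (Matrix.of fun i j : Fin l.length =>
      if i = j then l.get i
      else if (i : ℕ) + 1 = (j : ℕ) ∨ (j : ℕ) + 1 = (i : ℕ) then (1 : ℤ)
      else 0).det = 0 := by
  have hinv : Pm l 0 0 = 0 := by
    induction hl with
    | refl => simp [Pm, Mk]
    | tail h hstep ih => rw [blow _ _ hstep]; exact ih
  exact (key_s17 l).trans hinv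
end

section
/- Let k ≥ 6 and 1 ≤ j ≤ k, and define b_i = 2 for i ≠ j and b_j = 3. Then the null sequences (u_1,…,u_k) of length k satisfying u_i ≤ b_i for all i are exactly the following: the sequence (1,2,…,2,1) (with k−2 entries equal to 2); additionally the sequence (2,1,3,2,…,2,1) (with k−4 entries equal to 2 between the 3 and the final 1) if and only if j = 3; and additionally the sequence (1,2,…,2,3,1,2) (with k−4 entries equal to 2 between the initial 1 and the 3) if and only if j = k−2. -/
namespace S18

def Bd (l : List ℤ) : Prop := (∀ x ∈ l, x ≤ 3) ∧ l.count 3 ≤ 1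

def C (l : List ℤ) : Prop :=
  l = [0] ∨ l = [2,1,2] ∨ l = [2,2,1,3] ∨ l = [3,1,2,2] ∨
  (∃ n, l = 1 :: (List.replicate n 2 ++ [1])) ∨
  (∃ n, l = 2 :: 1 :: 3 :: (List.replicate n 2 ++ [1])) ∨
  (∃ n, l = 1 :: (List.replicate n 2 ++ [3,1,2]))

lemma split_rep (T : List ℤ) : ∀ (n : ℕ) (A R : List ℤ) (a : ℤ),
    List.replicate n 2 ++ T = A ++ a :: R →
    (∃ i m, n = i + m + 1 ∧ A = List.replicate i 2 ∧ a = 2 ∧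
        R = List.replicate m 2 ++ T) ∨
    (∃ A', A = List.replicate n 2 ++ A' ∧ T = A' ++ a :: R) := by
  intro n
  induction n with
  | zero =>
    intro A R a h
    right
    exact ⟨A, by simp, by simpa using h⟩
  | succ n ih =>
    intro A R a h
    rw [List.replicate_succ, List.cons_append] at h
    cases A with
    | nil =>
      rw [List.nil_append] at h
      injection h with h1 h2
      exact Or.inl ⟨0, n, by omega, rfl, h1.symm, h2.symm⟩
    | cons x A =>
      rw [List.cons_append] at h
      injection h with h1 h2
      rcases ih A R a h2 with ⟨i, m, hn, hA, ha, hR⟩ | ⟨A', hA, hT⟩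
      · exact Or.inl ⟨i+1, m, by omega,
          by rw [List.replicate_succ, hA, h1], ha, hR⟩
      · exact Or.inr ⟨A', by rw [List.replicate_succ, hA, h1]; simp, hT⟩

lemma split_rep_cons (T B : List ℤ) (b : ℤ) (m : ℕ)
    (h : List.replicate m 2 ++ T = b :: B) :
    (m = 0 ∧ T = b :: B) ∨
    (∃ m', m = m' + 1 ∧ b = 2 ∧ B = List.replicate m' 2 ++ T) := by
  cases m with
  | zero => exact Or.inl ⟨rfl, by simpa using h⟩
  | succ m =>
    rw [List.replicate_succ, List.cons_append] at h
    injection h with h1 h2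
    exact Or.inr ⟨m, rfl, h1.symm, h2.symm⟩

lemma bd_down {l l' : List ℤ} (h : IsStrictBlowup l l') (hb : Bd l') : Bd l := by
  obtain ⟨h1, h2⟩ := hb
  rcases h with ⟨A, B, a, b, rfl, rfl⟩ | ⟨A, a, rfl, rfl⟩
  · have ha : a + 1 ≤ 3 := h1 _ (by simp)
    have hbb : b + 1 ≤ 3 := h1 _ (by simp)
    constructor
    · intro x hx
      simp only [List.mem_append, List.mem_cons] at hx
      rcases hx with hx | rfl | rfl | hx
      · exact h1 x (by simp [hx])
      · omega
      · omega
      · exact h1 x (by simp [hx])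
    · simp only [List.count_append, List.count_cons, beq_iff_eq] at h2 ⊢
      split_ifs at h2 ⊢ <;> omega
  · have ha : a + 1 ≤ 3 := h1 _ (by simp)
    constructor
    · intro x hx
      simp only [List.mem_append, List.mem_cons] at hx
      rcases hx with hx | hx
      · exact h1 x (by simp [hx])
      · rcases hx with rfl | hx
        · omega
        · simp at hx
    · simp only [List.count_append, List.count_cons, List.count_nil, beq_iff_eq] at h2 ⊢
      split_ifs at h2 ⊢ <;> omega


lemma main_class {l : List ℤ} (h : IsNullSeq l) : Bd l → C l := by
  induction h with
  | refl => intro _; exact Or.inl rfl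
  | @tail lb lc h1 h2 ih =>
    intro hbd'
    have hC := ih (bd_down h2 hbd')
    obtain ⟨hle, hcnt⟩ := hbd'
    rcases hC with rfl | rfl | rfl | rfl | ⟨n, rfl⟩ | ⟨n, rfl⟩ | ⟨n, rfl⟩
    · -- lb = [0]
      rcases h2 with ⟨A, B, a, b, hl, rfl⟩ | ⟨A, a, hl, rfl⟩
      · exfalso
        rcases A with _ | ⟨x, A⟩
        · simp at hl
        · rw [List.cons_append] at hl; injection hl with e1 e2; simp at e2
      · rcases A with _ | ⟨x, A⟩
        · simp only [List.nil_append, List.cons.injEq, and_true] at hl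
          obtain rfl := hl
          refine Or.inr (Or.inr (Or.inr (Or.inr (Or.inl ⟨0, ?_⟩))))
          norm_num
        · exfalso; injection hl with e1 e2; simp at e2
    · -- lb = [2,1,2]
      rcases h2 with ⟨A, B, a, b, hl, rfl⟩ | ⟨A, a, hl, rfl⟩
      · rcases A with _ | ⟨x1, A⟩
        · simp only [List.nil_append, List.cons.injEq, and_true] at hl
          obtain ⟨rfl, rfl, rfl⟩ := hl
          refine Or.inr (Or.inr (Or.inr (Or.inl ?_)))
          norm_num
        · rcases A with _ | ⟨x2, A⟩
          · simp only [List.cons_append, List.nil_append, List.cons.injEq, and_true] at hl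
            obtain ⟨rfl, rfl, rfl, rfl⟩ := hl
            refine Or.inr (Or.inr (Or.inl ?_))
            norm_num
          · exfalso
            rcases A with _ | ⟨x3, A⟩
            · simp only [List.cons_append, List.nil_append, List.cons.injEq, and_true] at hl
              obtain ⟨rfl, rfl, rfl, hl⟩ := hl
              simp at hl
            · simp only [List.cons_append, List.cons.injEq, and_true] at hl
              obtain ⟨rfl, rfl, rfl, hl⟩ := hl
              simp at hl
      · rcases A with _ | ⟨x1, A⟩
        · exfalso; simp at hl
        · rcases A with _ | ⟨x2, A⟩
          · exfalso; simp only [List.cons_append, List.nil_append, List.cons.injEq, and_true] at hl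
            obtain ⟨rfl, hl⟩ := hl; simp at hl
          · rcases A with _ | ⟨x3, A⟩
            · simp only [List.cons_append, List.nil_append, List.cons.injEq, and_true] at hl
              obtain ⟨rfl, rfl, rfl, rfl⟩ := hl
              refine Or.inr (Or.inr (Or.inr (Or.inr (Or.inr (Or.inl ⟨0, ?_⟩)))))
              norm_num
            · exfalso
              simp only [List.cons_append, List.cons.injEq, and_true] at hl
              obtain ⟨rfl, rfl, rfl, hl⟩ := hl
              simp at hl
    · -- lb = [2,2,1,3]
      exfalso
      rcases h2 with ⟨A, B, a, b, hl, rfl⟩ | ⟨A, a, hl, rfl⟩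
      · rcases A with _ | ⟨x1, A⟩
        · simp only [List.nil_append, List.cons.injEq, and_true] at hl
          obtain ⟨rfl, rfl, rfl⟩ := hl
          simp only [List.count_append, List.count_cons, List.count_nil, beq_iff_eq] at hcnt
          norm_num at hcnt
        · rcases A with _ | ⟨x2, A⟩
          · simp only [List.cons_append, List.nil_append, List.cons.injEq, and_true] at hl
            obtain ⟨rfl, rfl, rfl, rfl⟩ := hl
            simp only [List.count_append, List.count_cons, List.count_nil, beq_iff_eq] at hcnt
            norm_num at hcnt
          · rcases A with _ | ⟨x3, A⟩
            · simp only [List.cons_append, List.nil_append, List.cons.injEq, and_true] at hl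
              obtain ⟨rfl, rfl, rfl, rfl, rfl⟩ := hl
              have h4 := hle (3+1) (by simp)
              norm_num at h4
            · rcases A with _ | ⟨x4, A⟩
              · simp only [List.cons_append, List.nil_append, List.cons.injEq, and_true] at hl
                obtain ⟨rfl, rfl, rfl, hl⟩ := hl
                simp at hl
              · simp only [List.cons_append, List.cons.injEq, and_true] at hl
                obtain ⟨rfl, rfl, rfl, rfl, hl⟩ := hl
                simp at hl
      · rcases A with _ | ⟨x1, A⟩
        · simp at hl
        · rcases A with _ | ⟨x2, A⟩
          · simp only [List.cons_append, List.nil_append, List.cons.injEq, and_true] at hl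
            obtain ⟨rfl, hl⟩ := hl; simp at hl
          · rcases A with _ | ⟨x3, A⟩
            · simp only [List.cons_append, List.nil_append, List.cons.injEq, and_true] at hl
              obtain ⟨rfl, rfl, hl⟩ := hl; simp at hl
            · rcases A with _ | ⟨x4, A⟩
              · simp only [List.cons_append, List.nil_append, List.cons.injEq, and_true] at hl
                obtain ⟨rfl, rfl, rfl, rfl, rfl⟩ := hl
                have h4 := hle (3+1) (by simp)
                norm_num at h4
              · simp only [List.cons_append, List.cons.injEq, and_true] at hl
                obtain ⟨rfl, rfl, rfl, rfl, hl⟩ := hl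
                simp at hl
    · -- lb = [3,1,2,2]
      exfalso
      rcases h2 with ⟨A, B, a, b, hl, rfl⟩ | ⟨A, a, hl, rfl⟩
      · rcases A with _ | ⟨x1, A⟩
        · simp only [List.nil_append, List.cons.injEq, and_true] at hl
          obtain ⟨rfl, rfl, rfl⟩ := hl
          have h4 := hle (3+1) (by simp)
          norm_num at h4
        · rcases A with _ | ⟨x2, A⟩
          · simp only [List.cons_append, List.nil_append, List.cons.injEq, and_true] at hl
            obtain ⟨rfl, rfl, rfl, rfl⟩ := hl
            simp only [List.count_append, List.count_cons, List.count_nil, beq_iff_eq] at hcnt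
            norm_num at hcnt
          · rcases A with _ | ⟨x3, A⟩
            · simp only [List.cons_append, List.nil_append, List.cons.injEq, and_true] at hl
              obtain ⟨rfl, rfl, rfl, rfl, rfl⟩ := hl
              simp only [List.count_append, List.count_cons, List.count_nil, beq_iff_eq] at hcnt
              norm_num at hcnt
            · rcases A with _ | ⟨x4, A⟩
              · simp only [List.cons_append, List.nil_append, List.cons.injEq, and_true] at hl
                obtain ⟨rfl, rfl, rfl, hl⟩ := hl
                simp at hl
              · simp only [List.cons_append, List.cons.injEq, and_true] at hl
                obtain ⟨rfl, rfl, rfl, rfl, hl⟩ := hl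
                simp at hl
      · rcases A with _ | ⟨x1, A⟩
        · simp at hl
        · rcases A with _ | ⟨x2, A⟩
          · simp only [List.cons_append, List.nil_append, List.cons.injEq, and_true] at hl
            obtain ⟨rfl, hl⟩ := hl; simp at hl
          · rcases A with _ | ⟨x3, A⟩
            · simp only [List.cons_append, List.nil_append, List.cons.injEq, and_true] at hl
              obtain ⟨rfl, rfl, hl⟩ := hl; simp at hl
            · rcases A with _ | ⟨x4, A⟩
              · simp only [List.cons_append, List.nil_append, List.cons.injEq, and_true] at hl
                obtain ⟨rfl, rfl, rfl, rfl⟩ := hl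
                simp only [List.count_append, List.count_cons, List.count_nil, beq_iff_eq] at hcnt
                norm_num at hcnt
              · simp only [List.cons_append, List.cons.injEq, and_true] at hl
                obtain ⟨rfl, rfl, rfl, rfl, hl⟩ := hl
                simp at hl
    · -- lb = 1 :: (replicate n 2 ++ [1])  (family F1)
      rcases h2 with ⟨A, B, a, b, hl, rfl⟩ | ⟨A, a, hl, rfl⟩
      · rcases A with _ | ⟨x1, A⟩
        · rw [List.nil_append] at hl
          injection hl with e1 e2
          subst e1
          rcases split_rep_cons [1] B b n e2 with ⟨rfl, h'⟩ | ⟨m', rfl, rfl, rfl⟩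
          · simp only [List.cons.injEq, and_true] at h'
            obtain ⟨rfl, rfl⟩ := h'
            refine Or.inr (Or.inl ?_)
            norm_num
          · refine Or.inr (Or.inr (Or.inr (Or.inr (Or.inr (Or.inl ⟨m', ?_⟩)))))
            norm_num
        · rw [List.cons_append] at hl
          injection hl with e1 e2
          subst e1
          rcases split_rep [1] n A (b :: B) a e2 with ⟨i, m, hn, rfl, rfl, hR⟩ | ⟨A', rfl, hT⟩
          · rcases split_rep_cons [1] B b m hR.symm with ⟨rfl, h''⟩ | ⟨m'', rfl, rfl, rfl⟩
            · simp only [List.cons.injEq, and_true] at h''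
              obtain ⟨rfl, rfl⟩ := h''
              refine Or.inr (Or.inr (Or.inr (Or.inr (Or.inr (Or.inr ⟨i, ?_⟩)))))
              norm_num
            · exfalso
              simp only [List.count_append, List.count_cons, List.count_replicate,
                List.count_nil, beq_iff_eq] at hcnt
              norm_num at hcnt
          · exfalso
            rcases A' with _ | ⟨y1, A'⟩
            · simp at hT
            · rw [List.cons_append] at hT
              injection hT with f1 f2
              simp at f2
      · -- end blowup: F1 (n+1)
        have h2' : ((1:ℤ) :: List.replicate n 2) ++ [1] = A ++ [a] := by simpa using hl
        obtain ⟨rfl, ht⟩ := List.append_inj' h2' rfl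
        simp only [List.cons.injEq] at ht
        obtain rfl := ht.1.symm
        refine Or.inr (Or.inr (Or.inr (Or.inr (Or.inl ⟨n + 1, ?_⟩))))
        rw [List.replicate_succ']
        simp
    · -- lb = 2 :: 1 :: 3 :: (replicate n 2 ++ [1])  (family F2)
      rcases h2 with ⟨A, B, a, b, hl, rfl⟩ | ⟨A, a, hl, rfl⟩
      · exfalso
        rcases A with _ | ⟨x1, A⟩
        · simp only [List.nil_append, List.cons.injEq] at hl
          obtain ⟨rfl, rfl, rfl⟩ := hl
          simp only [List.count_append, List.count_cons, List.count_replicate,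
            List.count_nil, beq_iff_eq] at hcnt
          norm_num at hcnt
        · rw [List.cons_append] at hl
          injection hl with e1 e2
          subst e1
          rcases A with _ | ⟨x2, A⟩
          · simp only [List.nil_append, List.cons.injEq] at e2
            obtain ⟨rfl, rfl, rfl⟩ := e2
            have h4 := hle (3+1) (by simp)
            norm_num at h4
          · rw [List.cons_append] at e2
            injection e2 with e3 e4
            subst e3
            rcases A with _ | ⟨x3, A⟩
            · simp only [List.nil_append, List.cons.injEq] at e4
              obtain ⟨rfl, e5⟩ := e4
              have h4 := hle (3+1) (by simp)
              norm_num at h4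
            · rw [List.cons_append] at e4
              injection e4 with e5 e6
              subst e5
              rcases split_rep [1] n A (b :: B) a e6 with ⟨i, m, hn, rfl, rfl, hR⟩ | ⟨A', rfl, hT⟩
              · simp only [List.count_append, List.count_cons, List.count_replicate,
                  List.count_nil, beq_iff_eq] at hcnt
                split_ifs at hcnt <;> omega
              · rcases A' with _ | ⟨y1, A'⟩
                · simp at hT
                · rw [List.cons_append] at hT
                  injection hT with f1 f2
                  simp at f2
      · -- end blowup: F2 (n+1)
        have h2' : ((2:ℤ) :: 1 :: 3 :: List.replicate n 2) ++ [1] = A ++ [a] := by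
          simpa using hl
        obtain ⟨rfl, ht⟩ := List.append_inj' h2' rfl
        simp only [List.cons.injEq, and_true] at ht
        obtain rfl := ht.symm
        refine Or.inr (Or.inr (Or.inr (Or.inr (Or.inr (Or.inl ⟨n + 1, ?_⟩)))))
        rw [List.replicate_succ']
        simp
    · -- lb = 1 :: (replicate n 2 ++ [3,1,2])  (family F3)
      exfalso
      rcases h2 with ⟨A, B, a, b, hl, rfl⟩ | ⟨A, a, hl, rfl⟩
      · rcases A with _ | ⟨x1, A⟩
        · rw [List.nil_append] at hl
          injection hl with e1 e2
          subst e1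
          rcases split_rep_cons [3,1,2] B b n e2 with ⟨rfl, h'⟩ | ⟨m', rfl, rfl, rfl⟩
          · simp only [List.cons.injEq] at h'
            obtain ⟨rfl, h'⟩ := h'
            have h4 := hle (3+1) (by simp)
            norm_num at h4
          · simp only [List.count_append, List.count_cons, List.count_replicate,
              List.count_nil, beq_iff_eq] at hcnt
            split_ifs at hcnt <;> omega
        · rw [List.cons_append] at hl
          injection hl with e1 e2
          subst e1
          rcases split_rep [3,1,2] n A (b :: B) a e2 with ⟨i, m, hn, rfl, rfl, hR⟩ | ⟨A', rfl, hT⟩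
          · rcases split_rep_cons [3,1,2] B b m hR.symm with ⟨rfl, h''⟩ | ⟨m'', rfl, rfl, rfl⟩
            · simp only [List.cons.injEq] at h''
              obtain ⟨rfl, h''⟩ := h''
              have h4 := hle (3+1) (by simp)
              norm_num at h4
            · simp only [List.count_append, List.count_cons, List.count_replicate,
                List.count_nil, beq_iff_eq] at hcnt
              split_ifs at hcnt <;> omega
          · rcases A' with _ | ⟨y1, A'⟩
            · simp only [List.nil_append, List.cons.injEq] at hT
              obtain ⟨rfl, rfl, rfl⟩ := hT
              have h4 := hle (3+1) (by simp)
              norm_num at h4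
            · rw [List.cons_append] at hT
              injection hT with f1 f2
              subst f1
              rcases A' with _ | ⟨y2, A'⟩
              · simp only [List.nil_append, List.cons.injEq, and_true] at f2
                obtain ⟨rfl, rfl, rfl⟩ := f2
                simp only [List.count_append, List.count_cons, List.count_replicate,
                  List.count_nil, beq_iff_eq] at hcnt
                split_ifs at hcnt <;> omega
              · rw [List.cons_append] at f2
                injection f2 with f3 f4
                rcases A' with _ | ⟨y3, A'⟩
                · simp at f4
                · rw [List.cons_append] at f4
                  injection f4 with f5 f6
                  simp at f6
      · -- end blowup of F3: contradiction
        have h2' : ((1:ℤ) :: (List.replicate n 2 ++ [3,1])) ++ [2] = A ++ [a] := by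
          rw [← hl]; simp
        obtain ⟨rfl, ht⟩ := List.append_inj' h2' rfl
        simp only [List.cons.injEq, and_true] at ht
        obtain rfl := ht.symm
        simp only [List.count_append, List.count_cons, List.count_replicate,
          List.count_nil, beq_iff_eq] at hcnt
        split_ifs at hcnt <;> omega


lemma nullF1 : ∀ n : ℕ, IsNullSeq (1 :: (List.replicate n 2 ++ [1])) := by
  intro n
  induction n with
  | zero =>
    refine Relation.ReflTransGen.single (Or.inr ⟨[], 0, by simp, by norm_num⟩)
  | succ n ih =>
    refine Relation.ReflTransGen.tail ih (Or.inr ⟨1 :: List.replicate n 2, 1, by simp, ?_⟩)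
    rw [List.replicate_succ']
    norm_num

lemma nullF2 : ∀ n : ℕ, IsNullSeq (2 :: 1 :: 3 :: (List.replicate n 2 ++ [1])) := by
  intro n
  induction n with
  | zero =>
    refine Relation.ReflTransGen.tail (nullF1 1) (Or.inl ⟨[], [1], 1, 2, by norm_num, by norm_num⟩)
  | succ n ih =>
    refine Relation.ReflTransGen.tail ih
      (Or.inr ⟨2 :: 1 :: 3 :: List.replicate n 2, 1, by simp, ?_⟩)
    rw [List.replicate_succ']
    norm_num

lemma nullF3 (n : ℕ) : IsNullSeq (1 :: (List.replicate n 2 ++ [3, 1, 2])) := by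
  refine Relation.ReflTransGen.tail (nullF1 (n+1))
    (Or.inl ⟨1 :: List.replicate n 2, [], 2, 1, ?_, by norm_num⟩)
  rw [List.replicate_succ']
  simp

lemma getD_le_two {l : List ℤ} (h : ∀ x ∈ l, x ≤ 2) (i : ℕ) : l.getD i 0 ≤ 2 := by
  rcases lt_or_ge i l.length with hi | hi
  · rw [List.getD_eq_getElem _ _ hi]; exact h _ (List.getElem_mem _)
  · rw [List.getD_eq_default _ _ hi]; norm_num

lemma memF1_le (n : ℕ) : ∀ x ∈ (1 : ℤ) :: (List.replicate n 2 ++ [1]), x ≤ 2 := by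
  intro x hx
  simp only [List.mem_cons, List.mem_append, List.mem_replicate, List.mem_singleton] at hx
  rcases hx with rfl | ⟨-, rfl⟩ | rfl | hx
  · norm_num
  · norm_num
  · norm_num
  · simp at hx

lemma cnt_aux (jj : ℕ) : ∀ (l : List ℤ) (t : ℕ),
    (∀ i < l.length, l.getD i 0 ≤ if i + t = jj then 3 else 2) → l.count 3 ≤ 1 := by
  intro l
  induction l with
  | nil => intro t _; simp
  | cons x tl ih =>
    intro t h
    have hx := h 0 (by simp)
    have htl : ∀ i < tl.length, tl.getD i 0 ≤ if i + (t+1) = jj then 3 else 2 := by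
      intro i hi
      have := h (i+1) (by simpa using Nat.succ_lt_succ hi)
      rw [List.getD_cons_succ] at this
      convert this using 2
      omega
    rw [List.count_cons]
    by_cases hx3 : x = 3
    · have ht : t = jj := by
        by_contra hne
        rw [List.getD_cons_zero] at hx
        have : ¬ (0 + t = jj) := by omega
        rw [if_neg this] at hx
        omega
      have hz : tl.count 3 = 0 := by
        rw [List.count_eq_zero]
        intro hmem
        obtain ⟨i, hi, hgi⟩ := List.mem_iff_getElem.mp hmem
        have h2 := htl i hi
        rw [List.getD_eq_getElem _ _ hi, hgi] at h2
        have : ¬ (i + (t+1) = jj) := by omega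
        rw [if_neg this] at h2
        omega
      simp [hz, hx3]
    · have := ih (t+1) htl
      simp only [beq_iff_eq]
      rw [if_neg hx3]
      omega

lemma le_three_of_bd (jj : ℕ) (l : List ℤ)
    (h : ∀ i < l.length, l.getD i 0 ≤ if i + 1 = jj then 3 else 2) :
    ∀ x ∈ l, x ≤ 3 := by
  intro x hx
  obtain ⟨i, hi, hgi⟩ := List.mem_iff_getElem.mp hx
  have h2 := h i hi
  rw [List.getD_eq_getElem _ _ hi, hgi] at h2
  split at h2 <;> omega


lemma getD_rep_app (T : List ℤ) (d : ℤ) : ∀ (n i : ℕ), (List.replicate n 2 ++ T).getD i d =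
    if i < n then 2 else T.getD (i - n) d := by
  intro n
  induction n with
  | zero => intro i; simp
  | succ n ih =>
    intro i
    rw [List.replicate_succ, List.cons_append]
    rcases i with _ | i
    · simp
    · rw [List.getD_cons_succ, ih]
      by_cases h : i < n
      · rw [if_pos h, if_pos (by omega)]
      · rw [if_neg h, if_neg (by omega)]
        congr 1
        omega

lemma memT1_le (n : ℕ) : ∀ x ∈ (List.replicate n 2 ++ [1] : List ℤ), x ≤ 2 := by
  intro x hx
  exact memF1_le n x (by simp [hx])

end S18

open S18

/-- Here `b` is given on 1-based indices `1,…,k` by `b i = 2` for `i ≠ j` and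
`b j = 3`; the list entries are compared via 0-based indexing. -/
theorem stmt18 (k : ℕ) (hk : 6 ≤ k) (j : ℕ) (hj1 : 1 ≤ j) (hjk : j ≤ k)
    (b : ℕ → ℤ) (hb : ∀ i, 1 ≤ i → i ≤ k → b i = if i = j then 3 else 2)
    (l : List ℤ) :
    (IsNullSeq l ∧ l.length = k ∧ ∀ i < k, l.getD i 0 ≤ b (i + 1)) ↔
      (l = 1 :: (List.replicate (k - 2) (2 : ℤ) ++ [1]) ∨
        (j = 3 ∧ l = 2 :: 1 :: 3 :: (List.replicate (k - 4) (2 : ℤ) ++ [1])) ∨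
        (j = k - 2 ∧ l = 1 :: (List.replicate (k - 4) (2 : ℤ) ++ [3, 1, 2]))) := by
  have hb' : ∀ i < k, b (i+1) = if i + 1 = j then 3 else 2 := by
    intro i hi
    rw [hb (i+1) (by omega) (by omega)]
  constructor
  · rintro ⟨hnull, hlen, hbnd⟩
    have hbnd' : ∀ i < l.length, l.getD i 0 ≤ if i + 1 = j then 3 else 2 := by
      intro i hi
      rw [← hb' i (by omega)]
      exact hbnd i (by omega)
    have hC := main_class hnull ⟨le_three_of_bd j l hbnd', cnt_aux j l 1 hbnd'⟩
    rcases hC with rfl | rfl | rfl | rfl | ⟨n, rfl⟩ | ⟨n, rfl⟩ | ⟨n, rfl⟩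
    · simp at hlen; omega
    · simp at hlen; omega
    · simp at hlen; omega
    · simp at hlen; omega
    · left
      have hn : n = k - 2 := by simp at hlen; omega
      rw [hn]
    · right; left
      have hn : n = k - 4 := by simp at hlen; omega
      have h3 := hbnd' 2 (by simp)
      rw [show ((2:ℤ) :: 1 :: 3 :: (List.replicate n 2 ++ [1])).getD 2 0 = 3 from rfl] at h3
      have hj : j = 3 := by
        by_contra hne
        rw [if_neg (by omega)] at h3
        omega
      exact ⟨hj, by rw [hn]⟩
    · right; right
      have hn : n = k - 4 := by simp at hlen; omega
      have hkn : k = n + 4 := by simp at hlen; omega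
      have h3 := hbnd' (n+1) (by simp)
      rw [List.getD_cons_succ, getD_rep_app] at h3
      rw [if_neg (by omega)] at h3
      rw [show n - n = 0 by omega] at h3
      rw [show ([3,1,2] : List ℤ).getD 0 0 = 3 from rfl] at h3
      have hj : j = k - 2 := by
        by_contra hne
        rw [if_neg (by omega)] at h3
        omega
      exact ⟨hj, by rw [hn]⟩
  · rintro (rfl | ⟨rfl, rfl⟩ | ⟨hj, rfl⟩)
    · refine ⟨nullF1 (k-2), by simp; omega, ?_⟩
      intro i hi
      rw [hb' i hi]
      have h2 := getD_le_two (memF1_le (k-2)) i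
      split <;> omega
    · refine ⟨nullF2 (k-4), by simp; omega, ?_⟩
      intro i hi
      rw [hb' i hi]
      rcases i with _ | _ | _ | m
      · norm_num
      · norm_num
      · norm_num
      · simp only [List.getD_cons_succ]
        rw [if_neg (by omega)]
        exact getD_le_two (memT1_le (k-4)) m
    · refine ⟨nullF3 (k-4), by simp; omega, ?_⟩
      intro i hi
      rw [hb' i hi]
      have hkn : k - 4 + 4 = k := by omega
      rcases i with _ | i
      · rw [List.getD_cons_zero]
        split <;> omega
      · rw [List.getD_cons_succ, getD_rep_app]
        by_cases h : i < k - 4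
        · rw [if_pos h, if_neg (by omega)]
        · rw [if_neg h]
          have : i - (k-4) = 0 ∨ i - (k-4) = 1 ∨ i - (k-4) = 2 := by omega
          rcases this with h0 | h0 | h0 <;> rw [h0]
          · rw [show ([3,1,2] : List ℤ).getD 0 0 = 3 from rfl, if_pos (by omega)]
          · rw [show ([3,1,2] : List ℤ).getD 1 0 = 1 from rfl]
            split <;> omega
          · rw [show ([3,1,2] : List ℤ).getD 2 0 = 2 from rfl]
            rw [if_neg (by omega)]
end
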